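/- arXiv:1705.05534 — 8 statements merged into one kernel-verified Lean document; each statement's English description precedes it below -/
import Mathlib

section
/- Let V be a finite-dimensional vector space over ℚ, let (c_n)_{n∈ℕ} be a countable family of non-zero vectors of V, let S ⊂ V be a ℚ-linear subspace of codimension one and let e ∈ V \ S. Assume: (i) for every n, writing c_n = γ_n·e + s_n with γ_n ∈ ℚ and s_n ∈ S, the coefficient γ_n is strictly positive; (ii) in V_ℝ := ℝ ⊗_ℚ V (equipped with its canonical topology as a finite-dimensional real vector space) the vectors (1/γ_n)·c_n converge to e as n → ∞; (iii) there exist indices n_1,…,n_s and strictly positive real numbers λ_1,…,λ_s such that λ_1·c_{n_1} + ⋯ + λ_s·c_{n_s} lies in the real span of e, and such that the images of c_{n_1},…,c_{n_s} in the quotient V/⟨e⟩ span V/⟨e⟩ over ℚ. Then there exists a finite subset F ⊆ ℕ such that the cone C = { Σ_n λ_n c_n : λ_n ∈ ℝ_{≥0}, almost all λ_n = 0 } ⊆ V_ℝ equals the set of non-negative real linear combinations of {c_i : i ∈ F}; in particular C is a rational polyhedral cone. -/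
/-!
Take a rational functional `f` with `f e = 1` that vanishes on `S`, so that `f (c n) = γ n`, and
extend it to `ψ` on `V_ℝ`. Applying `ψ` to the relation in (iii) shows that `e` is a combination
of the `c_{n_i}` with strictly positive coefficients. Since the `c_{n_i}` together with `e` span
`V_ℝ`, the `c_{n_i}` alone span it, so `e` is an interior point of the cone they generate. The
vectors `γ_n⁻¹ c_n` converge to `e`, hence all but finitely many of them lie in that cone, and the
whole cone is generated by those finitely many `c_n` and the `c_{n_i}`. When there are no `n_i`,
`V = ℚ e` and every `c_n` is a positive multiple of `c_0`.
-/

open scoped TensorProduct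
open Filter Topology Set Submodule

namespace PointedCone

variable {R ι W : Type*} [Semiring R] [PartialOrder R] [IsOrderedRing R]
  [AddCommMonoid W] [Module R W]

lemma coe_hull_range (w : ι → W) :
    (hull R (range w) : Set W) =
      {v | ∃ lam : ι →₀ R, (∀ n, 0 ≤ lam n) ∧ v = lam.sum fun n a => a • w n} := by
  classical
  ext v
  refine ⟨fun hv => ?_, ?_⟩
  · induction hv using Submodule.span_induction with
    | mem x hx =>
      obtain ⟨n, rfl⟩ := hx
      exact ⟨Finsupp.single n 1, fun m => by
        rw [Finsupp.single_apply]; split <;> simp, by simp⟩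
    | zero => exact ⟨0, fun _ => le_rfl, by simp⟩
    | add x y _ _ hx hy =>
      obtain ⟨a, ha, rfl⟩ := hx
      obtain ⟨b, hb, rfl⟩ := hy
      exact ⟨a + b, fun n => add_nonneg (ha n) (hb n),
        (Finsupp.sum_add_index' (h := fun n a => a • w n) (fun _ => zero_smul R _)
          fun _ _ _ => add_smul _ _ _).symm⟩
    | smul r x _ hx =>
      obtain ⟨a, ha, rfl⟩ := hx
      refine ⟨(r : R) • a, fun n => mul_nonneg r.2 (ha n), ?_⟩
      rw [← Nonneg.coe_smul, Finsupp.smul_sum,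
        Finsupp.sum_smul_index' (h := fun n a => a • w n) fun _ => zero_smul R _]
      simp only [smul_smul, smul_eq_mul]
  · rintro ⟨lam, hlam, rfl⟩
    exact sum_mem fun n _ => smul_mem _ (hlam n) (subset_hull ⟨n, rfl⟩)

lemma coe_hull_image_finset (w : ι → W) (F : Finset ι) :
    (hull R (w '' F) : Set W) =
      {v | ∃ lam : ι → R, (∀ n, 0 ≤ lam n) ∧ v = ∑ i ∈ F, lam i • w i} := by
  classical
  ext v
  refine ⟨fun hv => ?_, ?_⟩
  · induction hv using Submodule.span_induction with
    | mem x hx =>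
      obtain ⟨n, hn, rfl⟩ := hx
      exact ⟨Pi.single n 1, fun m => by
        rw [Pi.single_apply]; split <;> simp, by simp [Pi.single_apply, Finset.mem_coe.1 hn]⟩
    | zero => exact ⟨0, fun _ => le_rfl, by simp⟩
    | add x y _ _ hx hy =>
      obtain ⟨a, ha, rfl⟩ := hx
      obtain ⟨b, hb, rfl⟩ := hy
      exact ⟨a + b, fun n => add_nonneg (ha n) (hb n), by
        simp only [Pi.add_apply, add_smul, Finset.sum_add_distrib]⟩
    | smul r x _ hx =>
      obtain ⟨a, ha, rfl⟩ := hx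
      refine ⟨(r : R) • a, fun n => mul_nonneg r.2 (ha n), ?_⟩
      simp [← Nonneg.coe_smul, Finset.smul_sum, smul_smul]
  · rintro ⟨lam, hlam, rfl⟩
    exact sum_mem fun i hi => smul_mem _ (hlam i) (subset_hull ⟨i, hi, rfl⟩)

lemma hull_image_eq_hull_range {w : ι → W} {F : Set ι} (h : ∀ n, w n ∈ hull R (w '' F)) :
    hull R (w '' F) = hull R (range w) :=
  le_antisymm (span_mono (image_subset_range w F)) (span_le.2 (range_subset_iff.2 h))

end PointedCone

section
variable {W : Type*} [AddCommGroup W] [Module ℝ W]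

lemma eventually_mem_hull_range_of_tendsto {α ι : Type*} [Fintype ι] {l : Filter α}
    {u : ι → W} (hu : span ℝ (range u) = ⊤) {d : ι → ℝ} (hd : ∀ i, 0 < d i) {v : α → W}
    (hv : ∀ φ : W →ₗ[ℝ] ℝ, Tendsto (fun n => φ (v n)) l (𝓝 (φ (∑ i, d i • u i)))) :
    ∀ᶠ n in l, v n ∈ PointedCone.hull ℝ (range u) := by
  set x := ∑ i, d i • u i
  obtain ⟨σ, hσ⟩ := (Fintype.linearCombination ℝ u).exists_rightInverse_of_surjective
    (by rw [Fintype.range_linearCombination, hu])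
  -- coordinates via the section `σ`, recentred so that `x` gets the coordinates `d`
  have hrepr : ∀ y, y = ∑ i, (d i + (σ y i - σ x i)) • u i := by
    intro y
    have h := LinearMap.congr_fun hσ (y - x)
    simp only [LinearMap.comp_apply, map_sub, Fintype.linearCombination_apply,
      LinearMap.id_apply] at h
    simp only [add_smul, sub_smul, Finset.sum_add_distrib, Finset.sum_sub_distrib, h]
    abel
  have hev : ∀ i, ∀ᶠ n in l, 0 < d i + (σ (v n) i - σ x i) := fun i => by
    have h := ((hv (LinearMap.proj i ∘ₗ σ)).sub_const (σ x i)).const_add (d i)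
    simp only [LinearMap.comp_apply, LinearMap.proj_apply, sub_self, add_zero] at h
    exact h.eventually (lt_mem_nhds (hd i))
  filter_upwards [eventually_all.2 hev] with n hn
  rw [hrepr (v n)]
  exact sum_mem fun i _ => PointedCone.smul_mem _ (hn i).le (PointedCone.subset_hull ⟨i, rfl⟩)

lemma exists_finset_forall_mem_hull_image_of_tendsto {w : ℕ → W} {r : ℕ → ℝ}
    (hr : ∀ n, 0 < r n) {ι : Type*} [Fintype ι] {idx : ι → ℕ} (hspan : span ℝ (range (w ∘ idx)) = ⊤)
    {d : ι → ℝ} (hd : ∀ i, 0 < d i)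
    (hv : ∀ φ : W →ₗ[ℝ] ℝ,
      Tendsto (fun n => φ ((r n)⁻¹ • w n)) atTop (𝓝 (φ (∑ i, d i • w (idx i))))) :
    ∃ F : Finset ℕ, ∀ n, w n ∈ PointedCone.hull ℝ (w '' F) := by
  classical
  obtain ⟨N, hN⟩ := eventually_atTop.1 (eventually_mem_hull_range_of_tendsto hspan hd hv)
  refine ⟨Finset.range N ∪ Finset.univ.image idx, fun n => ?_⟩
  rcases lt_or_ge n N with hn | hn
  · exact PointedCone.subset_hull ⟨n, by simp [hn], rfl⟩
  · have hsub : range (w ∘ idx) ⊆ w '' ↑(Finset.range N ∪ Finset.univ.image idx) := by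
      rintro _ ⟨i, rfl⟩
      exact ⟨idx i, by simp, rfl⟩
    rw [← smul_inv_smul₀ (hr n).ne' (w n)]
    exact PointedCone.smul_mem _ (hr n).le (span_mono hsub (hN n hn))

lemma exists_finset_forall_mem_hull_image_of_eq_smul {w : ℕ → W} {r : ℕ → ℝ}
    (hr : ∀ n, 0 < r n) {x : W} (hw : ∀ n, w n = r n • x) :
    ∃ F : Finset ℕ, ∀ n, w n ∈ PointedCone.hull ℝ (w '' F) := by
  refine ⟨{0}, fun n => ?_⟩
  have hwn : w n = (r n / r 0) • w 0 := by
    rw [hw n, hw 0, smul_smul, div_mul_cancel₀ _ (hr 0).ne']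
  rw [hwn]
  exact PointedCone.smul_mem _ (div_pos (hr n) (hr 0)).le
    (PointedCone.subset_hull ⟨0, Finset.mem_singleton_self 0, rfl⟩)

lemma exists_pos_coeffs_of_sum_mem_span_singleton {ι : Type*} [Fintype ι] [Nonempty ι]
    (ψ : W →ₗ[ℝ] ℝ) {x : W} (hx : 0 < ψ x) {u : ι → W} (hu : ∀ i, 0 < ψ (u i))
    {lam : ι → ℝ} (hlam : ∀ i, 0 < lam i) (hmem : ∑ i, lam i • u i ∈ span ℝ {x}) :
    ∃ d : ι → ℝ, (∀ i, 0 < d i) ∧ x = ∑ i, d i • u i := by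
  obtain ⟨μ, hμx⟩ := mem_span_singleton.1 hmem
  have hψsum : 0 < ψ (∑ i, lam i • u i) := by
    simpa using Finset.sum_pos (fun i _ => mul_pos (hlam i) (hu i)) Finset.univ_nonempty
  have hμ : 0 < μ := by
    rw [← hμx, map_smul, smul_eq_mul] at hψsum
    exact pos_of_mul_pos_left hψsum hx.le
  refine ⟨fun i => μ⁻¹ * lam i, fun i => mul_pos (inv_pos.2 hμ) (hlam i), ?_⟩
  simp_rw [← smul_smul, ← Finset.smul_sum, ← hμx, inv_smul_smul₀ hμ.ne']

lemma exists_finset_forall_mem_hull_image {w : ℕ → W} {x : W} (ψ : W →ₗ[ℝ] ℝ) (hx : ψ x = 1)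
    (hw : ∀ n, 0 < ψ (w n))
    (hconv : ∀ φ : W →ₗ[ℝ] ℝ,
      Tendsto (fun n => φ ((ψ (w n))⁻¹ • w n)) atTop (𝓝 (φ x)))
    {ι : Type*} [Fintype ι] {idx : ι → ℕ} {lam : ι → ℝ} (hlam : ∀ i, 0 < lam i)
    (hsum : ∑ i, lam i • w (idx i) ∈ span ℝ {x})
    (hspan : span ℝ (insert x (range (w ∘ idx))) = ⊤) :
    ∃ F : Finset ℕ, ∀ n, w n ∈ PointedCone.hull ℝ (w '' F) := by
  rcases isEmpty_or_nonempty ι with hι | hι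
  · rw [range_eq_empty, insert_empty_eq] at hspan
    refine exists_finset_forall_mem_hull_image_of_eq_smul (x := x) hw fun n => ?_
    obtain ⟨a, ha⟩ := mem_span_singleton.1 (hspan ▸ mem_top : w n ∈ span ℝ {x})
    rw [← ha, map_smul, hx, smul_eq_mul, mul_one]
  · obtain ⟨d, hd, hxd⟩ :=
      exists_pos_coeffs_of_sum_mem_span_singleton ψ (hx ▸ one_pos) (fun i => hw _) hlam hsum
    have hx_mem : x ∈ span ℝ (range (w ∘ idx)) := by
      rw [hxd]
      exact sum_mem fun i _ => smul_mem _ _ (subset_span ⟨i, rfl⟩)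
    rw [span_insert_eq_span hx_mem] at hspan
    exact exists_finset_forall_mem_hull_image_of_tendsto hw hspan hd (hxd ▸ hconv)

end

lemma Submodule.exists_dual_eq_one_of_notMem {K V : Type*} [Field K] [AddCommGroup V]
    [Module K V] {p : Submodule K V} {e : V} (he : e ∉ p) :
    ∃ f : Module.Dual K V, f e = 1 ∧ ∀ v ∈ p, f v = 0 := by
  obtain ⟨g, hg⟩ := Module.Projective.exists_dual_eq_one K (x := p.mkQ e) (by simpa using he)
  exact ⟨g ∘ₗ p.mkQ, hg, fun v hv => by simp [(Quotient.mk_eq_zero p).2 hv]⟩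

lemma Submodule.span_insert_range_eq_top_iff {K M ι : Type*} [Ring K] [AddCommGroup M]
    [Module K M] (e : M) (v : ι → M) :
    span K (insert e (range v)) = ⊤ ↔
      span K (range fun i => Submodule.Quotient.mk (p := K ∙ e) (v i)) = ⊤ := by
  rw [span_insert, ← map_mkQ_eq_top, map_span, ← range_comp]
  rfl

lemma one_tmul_rat_smul {V : Type*} [AddCommGroup V] [Module ℚ V] (q : ℚ) (v : V) :
    (1 : ℝ) ⊗ₜ[ℚ] (q • v) = (q : ℝ) • (1 : ℝ) ⊗ₜ[ℚ] v := by
  rw [TensorProduct.tmul_smul, Rat.cast_smul_eq_qsmul]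

theorem cone_rational_polyhedral_criterion_general
    (V : Type*) [AddCommGroup V] [Module ℚ V]
    (c : ℕ → V)
    (S : Submodule ℚ V)
    (e : V) (he : e ∉ S)
    (γ : ℕ → ℚ) (s : ℕ → V) (hsS : ∀ n, s n ∈ S)
    (hdecomp : ∀ n, c n = γ n • e + s n)
    (hpos : ∀ n, 0 < γ n)
    (hconv : ∀ φ : (ℝ ⊗[ℚ] V) →ₗ[ℝ] ℝ,
      Filter.Tendsto (fun n => φ ((1 : ℝ) ⊗ₜ[ℚ] ((γ n)⁻¹ • c n))) Filter.atTop
        (nhds (φ ((1 : ℝ) ⊗ₜ[ℚ] e))))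
    (hiii : ∃ (t : ℕ) (idx : Fin t → ℕ) (lam : Fin t → ℝ),
      (∀ i, 0 < lam i) ∧
      (∑ i, lam i • ((1 : ℝ) ⊗ₜ[ℚ] c (idx i))) ∈
        Submodule.span ℝ ({(1 : ℝ) ⊗ₜ[ℚ] e} : Set (ℝ ⊗[ℚ] V)) ∧
      Submodule.span ℚ
        (Set.range fun i =>
          Submodule.Quotient.mk (p := Submodule.span ℚ ({e} : Set V)) (c (idx i))) = ⊤) :
    ∃ F : Finset ℕ,
      {v : ℝ ⊗[ℚ] V | ∃ lam : ℕ →₀ ℝ, (∀ n, 0 ≤ lam n) ∧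
          v = lam.sum fun n a => a • ((1 : ℝ) ⊗ₜ[ℚ] c n)} =
      {v : ℝ ⊗[ℚ] V | ∃ lam : ℕ → ℝ, (∀ n, 0 ≤ lam n) ∧
          v = ∑ i ∈ F, lam i • ((1 : ℝ) ⊗ₜ[ℚ] c i)} := by
  obtain ⟨f, hfe, hfS⟩ := S.exists_dual_eq_one_of_notMem he
  let ψ : (ℝ ⊗[ℚ] V) →ₗ[ℝ] ℝ := f.baseChange ℝ
  have hψc : ∀ n, ψ ((1 : ℝ) ⊗ₜ c n) = γ n := fun n => by
    simp [ψ, hdecomp n, hfe, hfS _ (hsS n)]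
  obtain ⟨t, idx, lam, hlam, hsum, hquot⟩ := hiii
  have hspan :
      span ℝ (insert ((1 : ℝ) ⊗ₜ[ℚ] e) (range fun i => (1 : ℝ) ⊗ₜ[ℚ] c (idx i))) = ⊤ := by
    rw [← baseChange_top ℝ (R := ℚ) (M := V), ← (span_insert_range_eq_top_iff e _).2 hquot,
      baseChange_span, image_insert_eq, ← range_comp]
    rfl
  obtain ⟨F, hF⟩ := exists_finset_forall_mem_hull_image (w := fun n => (1 : ℝ) ⊗ₜ[ℚ] c n) ψ
    (by simp [ψ, hfe]) (fun n => by simpa [hψc] using hpos n)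
    (fun φ => by simpa only [hψc, one_tmul_rat_smul, Rat.cast_inv] using hconv φ)
    hlam hsum hspan
  refine ⟨F, ?_⟩
  rw [← PointedCone.coe_hull_range, ← PointedCone.coe_hull_image_finset,
    PointedCone.hull_image_eq_hull_range hF]

/-- Criterion for rational polyhedrality of the cone generated by a countable family of
vectors `c_n` in a finite-dimensional `ℚ`-vector space `V`: if (i) with respect to a
codimension-one subspace `S` and a vector `e ∉ S` each `c_n = γ_n e + s_n` has `γ_n > 0`,
(ii) the vectors `(1/γ_n) c_n` converge to `e` in the canonical topology of the
finite-dimensional real vector space `V_ℝ = ℝ ⊗[ℚ] V` (expressed here as weak convergence,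
i.e. convergence under every real linear functional, which is equivalent in finite
dimension), and (iii) some strictly positive real combination of finitely many `c_{n_i}`
lies in the real span of `e` while the images of these `c_{n_i}` span `V/⟨e⟩` over `ℚ`,
then the cone `C = {Σ λ_n c_n : λ_n ∈ ℝ_{≥0}, almost all zero}` is generated by finitely
many of the `c_n`; in particular it is a rational polyhedral cone. -/
theorem cone_rational_polyhedral_criterion
    (V : Type*) [AddCommGroup V] [Module ℚ V] [FiniteDimensional ℚ V]
    (c : ℕ → V) (hc : ∀ n, c n ≠ 0)
    (S : Submodule ℚ V) (hS : Module.finrank ℚ (V ⧸ S) = 1)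
    (e : V) (he : e ∉ S)
    (γ : ℕ → ℚ) (s : ℕ → V) (hsS : ∀ n, s n ∈ S)
    (hdecomp : ∀ n, c n = γ n • e + s n)
    (hpos : ∀ n, 0 < γ n)
    (hconv : ∀ φ : (ℝ ⊗[ℚ] V) →ₗ[ℝ] ℝ,
      Filter.Tendsto (fun n => φ ((1 : ℝ) ⊗ₜ[ℚ] ((γ n)⁻¹ • c n))) Filter.atTop
        (nhds (φ ((1 : ℝ) ⊗ₜ[ℚ] e))))
    (hiii : ∃ (t : ℕ) (idx : Fin t → ℕ) (lam : Fin t → ℝ),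
      (∀ i, 0 < lam i) ∧
      (∑ i, lam i • ((1 : ℝ) ⊗ₜ[ℚ] c (idx i))) ∈
        Submodule.span ℝ ({(1 : ℝ) ⊗ₜ[ℚ] e} : Set (ℝ ⊗[ℚ] V)) ∧
      Submodule.span ℚ
        (Set.range fun i =>
          Submodule.Quotient.mk (p := Submodule.span ℚ ({e} : Set V)) (c (idx i))) = ⊤) :
    ∃ F : Finset ℕ,
      {v : ℝ ⊗[ℚ] V | ∃ lam : ℕ →₀ ℝ, (∀ n, 0 ≤ lam n) ∧
          v = lam.sum fun n a => a • ((1 : ℝ) ⊗ₜ[ℚ] c n)} =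
      {v : ℝ ⊗[ℚ] V | ∃ lam : ℕ → ℝ, (∀ n, 0 ≤ lam n) ∧
          v = ∑ i ∈ F, lam i • ((1 : ℝ) ⊗ₜ[ℚ] c i)} :=
  cone_rational_polyhedral_criterion_general V c S e he γ s hsS hdecomp hpos hconv hiii
end

section
/- Let p be a prime, ν a natural number and m an integer. Let N be the number of pairs (x,y) ∈ (ℤ/p^νℤ)² with x·y = m (mod p^ν). If m ≠ 0 and v_p(m) < ν, where v_p(m) denotes the p-adic valuation of m, then N = (v_p(m)+1)·(1−1/p)·p^ν. If m = 0 or v_p(m) ≥ ν, then N = ν·(1−1/p)·p^ν + p^ν. (Both equalities are equalities of rational numbers.) -/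
private noncomputable def Ncard (p ν : ℕ) (m : ℤ) : ℕ :=
  Nat.card {xy : ZMod (p ^ ν) × ZMod (p ^ ν) // xy.1 * xy.2 = (m : ZMod (p ^ ν))}

private lemma Ncard_zero (p : ℕ) (m : ℤ) : Ncard p 0 m = 1 := by
  unfold Ncard
  haveI : Subsingleton (ZMod (p ^ 0)) := by rw [pow_zero]; infer_instance
  have : Unique {xy : ZMod (p ^ 0) × ZMod (p ^ 0) // xy.1 * xy.2 = (m : ZMod (p ^ 0))} :=
    ⟨⟨⟨(0, 0), Subsingleton.elim _ _⟩⟩, fun a => Subtype.ext (Subsingleton.elim _ _)⟩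
  exact Nat.card_unique

private lemma nonunit_dvd {p : ℕ} (hp : p.Prime) {ν : ℕ} (x : ZMod (p ^ (ν + 1)))
    (hx : ¬ IsUnit x) : p ∣ x.val := by
  haveI : NeZero (p ^ (ν + 1)) := ⟨pow_ne_zero _ hp.pos.ne'⟩
  by_contra h
  apply hx
  have h1 : Nat.Coprime p x.val := (Nat.Prime.coprime_iff_not_dvd hp).mpr h
  have h2 : Nat.Coprime x.val (p ^ (ν + 1)) := (Nat.Coprime.pow_left _ h1).symm
  have := (ZMod.isUnit_iff_coprime x.val (p ^ (ν + 1))).mpr h2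
  rwa [ZMod.natCast_zmod_val] at this

private lemma card_nonunit_part (p : ℕ) (hp : p.Prime) (ν : ℕ) (m' : ℤ) :
    Nat.card {xy : ZMod (p ^ (ν + 1)) × ZMod (p ^ (ν + 1)) //
        xy.1 * xy.2 = ((p * m' : ℤ) : ZMod (p ^ (ν + 1))) ∧ ¬ IsUnit xy.1}
      = p * Ncard p ν m' := by
  haveI : NeZero (p ^ (ν + 1)) := ⟨pow_ne_zero _ hp.pos.ne'⟩
  haveI : NeZero (p ^ ν) := ⟨pow_ne_zero _ hp.pos.ne'⟩
  have hp0 : 0 < p := hp.pos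
  have hq'0 : 0 < p ^ ν := pow_pos hp0 ν
  have hq : p ^ (ν + 1) = p * p ^ ν := by rw [pow_succ]; ring
  -- the equivalence
  have E : Fin p × {xy : ZMod (p ^ ν) × ZMod (p ^ ν) // xy.1 * xy.2 = (m' : ZMod (p ^ ν))}
      ≃ {xy : ZMod (p ^ (ν + 1)) × ZMod (p ^ (ν + 1)) //
        xy.1 * xy.2 = ((p * m' : ℤ) : ZMod (p ^ (ν + 1))) ∧ ¬ IsUnit xy.1} := by
    refine
      { toFun := fun s =>
          ⟨(((p * (s.2.1.1.val) : ℕ) : ZMod (p ^ (ν + 1))),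
            ((s.2.1.2.val + s.1.val * p ^ ν : ℕ) : ZMod (p ^ (ν + 1)))), ?_, ?_⟩
        invFun := fun s =>
          (⟨s.1.2.val / p ^ ν, ?_⟩,
            ⟨(((s.1.1.val / p : ℕ) : ZMod (p ^ ν)), ((s.1.2.val : ℕ) : ZMod (p ^ ν))), ?_⟩)
        left_inv := ?_
        right_inv := ?_ }
    · -- product equation
      obtain ⟨t, ⟨⟨x', y'⟩, h⟩⟩ := s
      simp only
      have hmod : (x'.val * y'.val : ℤ) ≡ m' [ZMOD (p ^ ν : ℕ)] := by
        rw [← ZMod.intCast_eq_intCast_iff]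
        push_cast
        rw [ZMod.natCast_zmod_val, ZMod.natCast_zmod_val]
        exact h
      have h2 : (p : ℤ) * (x'.val * y'.val) ≡ p * m' [ZMOD (p : ℤ) * (p ^ ν : ℕ)] :=
        hmod.mul_left'
      have h2' : ((p * x'.val) * (y'.val + t.val * p ^ ν) : ℤ) ≡ p * m'
          [ZMOD ((p ^ (ν + 1) : ℕ) : ℤ)] := by
        have e1 : ((p * x'.val) * (y'.val + t.val * p ^ ν) : ℤ)
            = p * (x'.val * y'.val) + (x'.val * t.val) * ((p ^ (ν + 1) : ℕ) : ℤ) := by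
          push_cast [hq]; ring
        have e2 : ((p ^ (ν + 1) : ℕ) : ℤ) = (p : ℤ) * (p ^ ν : ℕ) := by push_cast [hq]; ring
        rw [e1, e2]
        calc (p : ℤ) * (x'.val * y'.val) + (x'.val * t.val) * ((p : ℤ) * (p ^ ν : ℕ))
            ≡ p * (x'.val * y'.val) + 0 [ZMOD (p : ℤ) * (p ^ ν : ℕ)] :=
              (Int.ModEq.refl _).add ((Int.modEq_zero_iff_dvd).mpr (dvd_mul_left _ _))
          _ ≡ p * m' [ZMOD (p : ℤ) * (p ^ ν : ℕ)] := by rw [add_zero]; exact h2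
      rw [← ZMod.intCast_eq_intCast_iff] at h2'
      calc ((p * x'.val : ℕ) : ZMod (p ^ (ν + 1))) * ((y'.val + t.val * p ^ ν : ℕ) : _)
          = (((p * x'.val) * (y'.val + t.val * p ^ ν) : ℤ) : ZMod (p ^ (ν + 1))) := by push_cast; ring
        _ = ((p * m' : ℤ) : ZMod (p ^ (ν + 1))) := h2'
    · -- non-unit
      obtain ⟨t, ⟨⟨x', y'⟩, h⟩⟩ := s
      simp only
      intro hu
      have hcop := (ZMod.isUnit_iff_coprime (p * x'.val) (p ^ (ν + 1))).mp hu
      have hd : p ∣ Nat.gcd (p * x'.val) (p ^ (ν + 1)) :=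
        Nat.dvd_gcd ⟨x'.val, rfl⟩ (dvd_pow_self p (Nat.succ_ne_zero ν))
      rw [hcop] at hd
      exact hp.one_lt.ne' (Nat.dvd_one.mp hd)
    · -- Fin bound
      refine (Nat.div_lt_iff_lt_mul hq'0).mpr ?_
      rw [← hq]
      exact ZMod.val_lt _
    · -- invFun property
      obtain ⟨⟨x, y⟩, hxy, hx⟩ := s
      simp only
      have hdx : p ∣ x.val := nonunit_dvd hp x hx
      have h3 : (x.val * y.val : ℤ) ≡ p * m' [ZMOD ((p ^ (ν + 1) : ℕ) : ℤ)] := by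
        rw [← ZMod.intCast_eq_intCast_iff]
        push_cast [ZMod.natCast_zmod_val]
        have hxy' : x * y = ((p * m' : ℤ) : ZMod (p ^ (ν + 1))) := hxy
        push_cast at hxy'
        exact hxy'
      have hx' : (x.val : ℤ) = p * ((x.val / p : ℕ) : ℤ) := by
        exact_mod_cast (Nat.mul_div_cancel' hdx).symm
      have h4 : (((x.val / p : ℕ) : ℤ) * y.val) ≡ m' [ZMOD ((p ^ ν : ℕ) : ℤ)] := by
        rw [Int.modEq_iff_dvd] at h3 ⊢
        have e2 : ((p ^ (ν + 1) : ℕ) : ℤ) = (p : ℤ) * ((p ^ ν : ℕ) : ℤ) := by push_cast [hq]; ring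
        rw [e2, hx'] at h3
        have h5 : (p : ℤ) * ((p ^ ν : ℕ) : ℤ) ∣ (p : ℤ) * (m' - ((x.val / p : ℕ) : ℤ) * y.val) := by
          convert h3 using 1; ring
        exact (mul_dvd_mul_iff_left (show (p : ℤ) ≠ 0 by exact_mod_cast hp0.ne')).mp h5
      have h4' := (ZMod.intCast_eq_intCast_iff _ _ _).mpr h4
      rw [← h4', Int.cast_mul, Int.cast_natCast, Int.cast_natCast]
    · -- left inverse
      rintro ⟨t, ⟨⟨x', y'⟩, h⟩⟩
      have hx'lt : x'.val < p ^ ν := ZMod.val_lt _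
      have hy'lt : y'.val < p ^ ν := ZMod.val_lt _
      have ht : t.val + 1 ≤ p := t.isLt
      have hXval : ((p * x'.val : ℕ) : ZMod (p ^ (ν + 1))).val = p * x'.val :=
        ZMod.val_cast_of_lt (by rw [hq]; exact (mul_lt_mul_iff_right₀ hp0).mpr hx'lt)
      have hYb : y'.val + t.val * p ^ ν < p ^ (ν + 1) := by rw [hq]; nlinarith
      have hYval : ((y'.val + t.val * p ^ ν : ℕ) : ZMod (p ^ (ν + 1))).val
          = y'.val + t.val * p ^ ν := ZMod.val_cast_of_lt hYb
      refine Prod.ext ?_ (Subtype.ext (Prod.ext ?_ ?_))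
      · apply Fin.ext
        simp only [hYval]
        rw [Nat.add_mul_div_right _ _ hq'0, Nat.div_eq_of_lt hy'lt, zero_add]
      · simp only [hXval]
        rw [Nat.mul_div_cancel_left _ hp0, ZMod.natCast_zmod_val]
      · dsimp only
        rw [hYval, Nat.cast_add, Nat.cast_mul, ZMod.natCast_self, mul_zero, add_zero,
          ZMod.natCast_zmod_val]
    · -- right inverse
      rintro ⟨⟨x, y⟩, hxy, hx⟩
      have hdx : p ∣ x.val := nonunit_dvd hp x hx
      have hxlt : x.val < p ^ (ν + 1) := ZMod.val_lt x
      have hylt : y.val < p ^ (ν + 1) := ZMod.val_lt y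
      have hxp : x.val / p < p ^ ν :=
        (Nat.div_lt_iff_lt_mul hp0).mpr (by rw [← pow_succ]; exact hxlt)
      refine Subtype.ext (Prod.ext ?_ ?_)
      · simp only
        rw [ZMod.val_cast_of_lt hxp, Nat.mul_div_cancel' hdx, ZMod.natCast_zmod_val]
      · simp only
        rw [ZMod.val_natCast, Nat.mod_add_div', ZMod.natCast_zmod_val]
  rw [← Nat.card_congr E, Nat.card_prod, Nat.card_eq_fintype_card, Fintype.card_fin]
  rfl

private lemma card_unit_part' (q : ℕ) [NeZero q] (c : ZMod q) :
    Nat.card {xy : ZMod q × ZMod q // xy.1 * xy.2 = c ∧ IsUnit xy.1} = Nat.totient q := by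
  have e : (ZMod q)ˣ ≃ {xy : ZMod q × ZMod q // xy.1 * xy.2 = c ∧ IsUnit xy.1} :=
    { toFun := fun u => ⟨((u : ZMod q), (↑u⁻¹ * c)), by
        simp [Units.mul_inv_cancel_left], u.isUnit⟩
      invFun := fun s => s.2.2.unit
      left_inv := fun u => by
        ext
        simp
      right_inv := fun s => by
        ext
        · simp
        · obtain ⟨⟨x, y⟩, h1, h2⟩ := s
          simp only [IsUnit.unit_spec]
          have hx : (h2.unit : ZMod q) = x := h2.unit_spec
          calc (↑h2.unit⁻¹ * c : ZMod q) = ↑h2.unit⁻¹ * (x * y) := by rw [h1]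
            _ = ↑h2.unit⁻¹ * (↑h2.unit * y) := by rw [hx]
            _ = y := Units.inv_mul_cancel_left _ _ }
  rw [← Nat.card_congr e, Nat.card_eq_fintype_card, ZMod.card_units_eq_totient]

private lemma card_split (q : ℕ) [NeZero q] (c : ZMod q) :
    Nat.card {xy : ZMod q × ZMod q // xy.1 * xy.2 = c} =
      Nat.card {xy : ZMod q × ZMod q // xy.1 * xy.2 = c ∧ IsUnit xy.1}
      + Nat.card {xy : ZMod q × ZMod q // xy.1 * xy.2 = c ∧ ¬ IsUnit xy.1} := by
  classical
  rw [← Nat.card_sum]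
  refine Nat.card_congr ?_
  refine (Equiv.sumCompl (fun t : {xy : ZMod q × ZMod q // xy.1 * xy.2 = c} =>
    IsUnit t.1.1)).symm.trans (Equiv.sumCongr ?_ ?_) |>.symm.symm
  · exact (Equiv.subtypeSubtypeEquivSubtypeInter
      (fun xy : ZMod q × ZMod q => xy.1 * xy.2 = c) (fun xy => IsUnit xy.1))
  · exact (Equiv.subtypeSubtypeEquivSubtypeInter
      (fun xy : ZMod q × ZMod q => xy.1 * xy.2 = c) (fun xy => ¬ IsUnit xy.1))

private lemma Ncard_succ (p : ℕ) (hp : p.Prime) (ν : ℕ) (m : ℤ) :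
    Ncard p (ν + 1) m = (p ^ (ν + 1) - p ^ ν)
      + (if (p : ℤ) ∣ m then p * Ncard p ν (m / p) else 0) := by
  haveI : NeZero (p ^ (ν + 1)) := ⟨pow_ne_zero _ hp.pos.ne'⟩
  have htot : Nat.totient (p ^ (ν + 1)) = p ^ (ν + 1) - p ^ ν := by
    rw [Nat.totient_prime_pow_succ hp]
    have h1 : p ^ ν * (p - 1) + p ^ ν = p ^ (ν + 1) := by
      have h2 : p ^ ν * (p - 1) + p ^ ν = p ^ ν * ((p - 1) + 1) := by ring
      rw [h2, Nat.sub_add_cancel hp.one_le, ← pow_succ]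
    omega
  show Nat.card _ = _
  rw [card_split (p ^ (ν + 1)) ((m : ZMod (p ^ (ν + 1)))),
    card_unit_part' (p ^ (ν + 1)) ((m : ZMod (p ^ (ν + 1)))), htot]
  congr 1
  by_cases hd : (p : ℤ) ∣ m
  · rw [if_pos hd]
    obtain ⟨m', rfl⟩ := hd
    rw [Int.mul_ediv_cancel_left _ (by exact_mod_cast hp.pos.ne' : (p : ℤ) ≠ 0)]
    exact card_nonunit_part p hp ν m'
  · rw [if_neg hd]
    have he : IsEmpty {xy : ZMod (p ^ (ν + 1)) × ZMod (p ^ (ν + 1)) //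
        xy.1 * xy.2 = (m : ZMod (p ^ (ν + 1))) ∧ ¬ IsUnit xy.1} := by
      constructor
      rintro ⟨⟨x, y⟩, hxy, hx⟩
      apply hd
      have hdx : p ∣ x.val := nonunit_dvd hp x hx
      have h3 : ((x.val * y.val : ℕ) : ℤ) ≡ m [ZMOD ((p ^ (ν + 1) : ℕ) : ℤ)] := by
        rw [← ZMod.intCast_eq_intCast_iff]
        push_cast [ZMod.natCast_zmod_val]
        exact hxy
      have h5 : (p : ℤ) ∣ (m - ((x.val * y.val : ℕ) : ℤ)) :=
        dvd_trans (⟨(p ^ ν : ℕ), by push_cast [pow_succ]; ring⟩ :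
          (p : ℤ) ∣ ((p ^ (ν + 1) : ℕ) : ℤ)) h3.dvd
      have h6 : (p : ℤ) ∣ ((x.val * y.val : ℕ) : ℤ) := by
        exact_mod_cast Int.natCast_dvd_natCast.mpr (Dvd.dvd.mul_right hdx y.val)
      have := dvd_add h5 h6
      simpa using this
    exact Nat.card_of_isEmpty

private lemma Ncard_formula (p : ℕ) (hp : p.Prime) :
    ∀ ν : ℕ, ∀ m : ℤ,
      (Ncard p ν m : ℚ) = if m ≠ 0 ∧ padicValInt p m < ν then
          ((padicValInt p m : ℚ) + 1) * (1 - 1 / (p : ℚ)) * (p : ℚ) ^ ν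
        else (ν : ℚ) * (1 - 1 / (p : ℚ)) * (p : ℚ) ^ ν + (p : ℚ) ^ ν := by
  haveI : Fact p.Prime := ⟨hp⟩
  have hpQ : (p : ℚ) ≠ 0 := by exact_mod_cast hp.pos.ne'
  intro ν
  induction ν with
  | zero =>
    intro m
    rw [if_neg (show ¬(m ≠ 0 ∧ padicValInt p m < 0) from by simp), Ncard_zero]
    norm_num
  | succ ν ih =>
    intro m
    have hle : p ^ ν ≤ p ^ (ν + 1) := Nat.pow_le_pow_right hp.pos (by omega)
    have hcast : ((p ^ (ν + 1) - p ^ ν : ℕ) : ℚ) = (p : ℚ) ^ (ν + 1) - (p : ℚ) ^ ν := by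
      push_cast [hle]
      ring
    rw [Ncard_succ p hp ν m]
    by_cases hd : (p : ℤ) ∣ m
    · by_cases hm : m = 0
      · subst hm
        rw [Int.zero_ediv, if_pos (dvd_zero (p : ℤ))]
        have h := ih 0
        rw [if_neg (show ¬((0 : ℤ) ≠ 0 ∧ padicValInt p 0 < ν) from by simp)] at h
        rw [if_neg (show ¬((0 : ℤ) ≠ 0 ∧ padicValInt p 0 < ν + 1) from by simp)]
        push_cast [hcast, h]
        field_simp
        ring
      · have hq : m / p * p = m := Int.ediv_mul_cancel hd
        have hm' : m / p ≠ 0 := by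
          intro h0
          apply hm
          rw [← hq, h0, zero_mul]
        have hv : padicValInt p m = padicValInt p (m / p) + 1 := by
          conv_lhs => rw [← hq]
          exact padicValInt_mul_eq_succ _ hm'
        have h := ih (m / p)
        by_cases hlt : padicValInt p (m / p) < ν
        · rw [if_pos (⟨hm', hlt⟩ : m / p ≠ 0 ∧ padicValInt p (m / p) < ν)] at h
          rw [if_pos hd, if_pos (⟨hm, by omega⟩ : m ≠ 0 ∧ padicValInt p m < ν + 1), hv]
          push_cast [hcast, h]
          field_simp
          ring
        · rw [if_neg (show ¬(m / p ≠ 0 ∧ padicValInt p (m / p) < ν) from by tauto)] at h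
          rw [if_pos hd, if_neg (show ¬(m ≠ 0 ∧ padicValInt p m < ν + 1) from by
            push_neg; intro _; omega)]
          push_cast [hcast, h]
          field_simp
          ring
    · have hm : m ≠ 0 := by
        rintro rfl
        exact hd (dvd_zero _)
      have hv : padicValInt p m = 0 := padicValInt.eq_zero_of_not_dvd hd
      rw [if_neg hd, if_pos (⟨hm, by omega⟩ : m ≠ 0 ∧ padicValInt p m < ν + 1), hv]
      push_cast [hcast]
      field_simp
      ring

/-- Representation numbers of the hyperbolic plane `U = (ℤ², Q(x,y) = xy)` modulo `p^ν`:
if `m ≠ 0` and `v_p(m) < ν` then `N^U_{m,0}(p^ν) = (v_p(m)+1)(1-1/p)p^ν`, and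
if `m = 0` or `v_p(m) ≥ ν` then `N^U_{m,0}(p^ν) = ν(1-1/p)p^ν + p^ν`. -/
theorem repNumber_hyperbolic_plane (p : ℕ) (hp : p.Prime) (ν : ℕ) (m : ℤ) :
    (if m ≠ 0 ∧ padicValInt p m < ν then
      (Nat.card {xy : ZMod (p ^ ν) × ZMod (p ^ ν) // xy.1 * xy.2 = (m : ZMod (p ^ ν))} : ℚ)
        = (padicValInt p m + 1) * (1 - 1 / (p : ℚ)) * (p : ℚ) ^ ν
    else
      (Nat.card {xy : ZMod (p ^ ν) × ZMod (p ^ ν) // xy.1 * xy.2 = (m : ZMod (p ^ ν))} : ℚ)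
        = ν * (1 - 1 / (p : ℚ)) * (p : ℚ) ^ ν + (p : ℚ) ^ ν) := by
  have h := Ncard_formula p hp ν m
  unfold Ncard at h
  split_ifs at h ⊢ with hc
  · exact h
  · exact h
end

section
/- Let p be a prime, ν a natural number and m an integer. Let N be the number of quadruples (x₁,y₁,x₂,y₂) ∈ (ℤ/p^νℤ)⁴ with x₁·y₁ + x₂·y₂ = m (mod p^ν). If m ≠ 0 and v_p(m) < ν, where v_p(m) denotes the p-adic valuation of m, then N = p^{3ν}·(1+p^{−1})·(1−p^{−v_p(m)−1}). If m = 0 or v_p(m) ≥ ν, then N = p^{3ν}·(1 + p^{−1} − p^{−ν−1}). (Both equalities are equalities of rational numbers.) -/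
/-!
Write `Q(x, y, z, w) = x y + z w` and `N_k(c) = repCount (p ^ k) c`, and work in
`R = ZMod (p ^ (k + 1))`. If `x` or `z` is a unit, the additive map `(y, w) ↦ x y + z w` is onto,
so each of the `p^(2k+2) - p^(2k)` pairs `(x, z)` not both divisible by `p` contributes `p^(k+1)`
solutions of `Q = c`. The other solutions exist only when `p ∣ c`; writing `x = p a`, `z = p b`
turns `Q = p m` into `p Q(a, y, b, w) = p m`, and since `p u = 0` in `R` exactly when `u` vanishes
modulo `p^k`, this is the equation `Q = m` modulo `p^k`. Counting fibres of these additive maps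
gives `N_{k+1}(p m) = p^(3k+3) - p^(3k+1) + p² N_k(m)` and `N_{k+1}(m) = p^(3k+3) - p^(3k+1)` for
`p ∤ m`; iterating along `m = p^(v_p(m)) m₀` gives both closed forms.
-/

open Finset

namespace AddMonoidHom

theorem card_ker_prodMap {G H G' H' : Type*} [AddGroup G] [AddGroup H] [AddGroup G']
    [AddGroup H'] (φ : G →+ H) (ψ : G' →+ H') :
    Nat.card (φ.prodMap ψ).ker = Nat.card φ.ker * Nat.card ψ.ker := by
  rw [ker_prodMap, Nat.card_congr (AddSubgroup.prodEquiv _ _).toEquiv, Nat.card_prod]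

theorem mem_range_mulLeft {R : Type*} [Ring R] {t x : R} : x ∈ (mulLeft t).range ↔ t ∣ x :=
  ⟨fun ⟨c, hc⟩ => ⟨c, hc.symm⟩, fun ⟨c, hc⟩ => ⟨c, hc.symm⟩⟩

variable {G H : Type*} [AddGroup G] [AddGroup H] [Fintype G] [DecidableEq H]

theorem card_fiber_eq_card_ker (φ : G →+ H) (g₀ : G) :
    #{g | φ g = φ g₀} = Nat.card φ.ker := by
  rw [← Fintype.card_subtype, ← Nat.card_eq_fintype_card]
  exact Nat.card_congr
    { toFun := fun g => ⟨g - g₀, by simp [mem_ker, g.2]⟩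
      invFun := fun k => ⟨k + g₀, by simp [(mem_ker).mp k.2]⟩
      left_inv := fun g => by simp
      right_inv := fun k => by simp }

theorem card_filter_map_mem (φ : G →+ H) [DecidablePred (· ∈ φ.range)] (s : Finset H) :
    #{g | φ g ∈ s} = #{h ∈ s | h ∈ φ.range} * Nat.card φ.ker := by
  rw [card_eq_sum_card_fiberwise (f := φ) (t := {h ∈ s | h ∈ φ.range})
    (fun g hg => mem_filter.mpr ⟨(mem_filter.mp hg).2, g, rfl⟩), ← smul_eq_mul, ← sum_const]
  refine sum_congr rfl fun h hh => ?_
  obtain ⟨g₀, rfl⟩ := (mem_filter.mp hh).2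
  rw [filter_filter, ← card_fiber_eq_card_ker φ g₀]
  congr 1
  exact filter_congr fun g _ => ⟨fun h => h.2, fun h => ⟨h ▸ (mem_filter.mp hh).1, h⟩⟩

theorem card_fiber_mul_card_of_surjective [Fintype H] (φ : G →+ H)
    (hφ : Function.Surjective φ) (h : H) :
    #{g | φ g = h} * Fintype.card H = Fintype.card G := by
  classical
  obtain ⟨g₀, rfl⟩ := hφ h
  have := φ.card_filter_map_mem univ
  simp only [mem_univ, mem_range, hφ _, filter_true, card_univ] at this
  rw [card_fiber_eq_card_ker, this, mul_comm]

end AddMonoidHom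

section HyperbolicForm

variable {R : Type*} [CommRing R]

def hyperbolicForm (v : R × R × R × R) : R := v.1 * v.2.1 + v.2.2.1 * v.2.2.2

variable [Fintype R] [DecidableEq R]

theorem card_linear_eq_of_isUnit {x z : R} (h : IsUnit x ∨ IsUnit z) (c : R) :
    #{yw : R × R | x * yw.1 + z * yw.2 = c} = Fintype.card R := by
  let L := (AddMonoidHom.mulLeft x).coprod (AddMonoidHom.mulLeft z)
  have hL : Function.Surjective L := by
    intro c
    rcases h with ⟨u, rfl⟩ | ⟨u, rfl⟩
    · exact ⟨(↑u⁻¹ * c, 0), by simp [L]⟩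
    · exact ⟨(0, ↑u⁻¹ * c), by simp [L]⟩
  have := L.card_fiber_mul_card_of_surjective hL c
  rw [Fintype.card_prod] at this
  exact Nat.eq_of_mul_eq_mul_right Fintype.card_pos this

theorem card_hyperbolicForm_eq_and_of_isUnit (P : R × R → Prop) [DecidablePred P]
    (hP : ∀ xz, P xz → IsUnit xz.1 ∨ IsUnit xz.2) (c : R) :
    #{v : R × R × R × R | hyperbolicForm v = c ∧ P (v.1, v.2.2.1)}
      = #{xz | P xz} * Fintype.card R := by
  rw [card_eq_sum_card_fiberwise (f := fun v => (v.1, v.2.2.1)) (t := {xz | P xz})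
    (fun v hv => by simpa using (mem_filter.mp hv).2.2), ← smul_eq_mul, ← sum_const]
  refine sum_congr rfl fun xz hxz => ?_
  rw [← card_linear_eq_of_isUnit (hP xz (mem_filter.mp hxz).2) c]
  refine card_nbij' (fun v => (v.2.1, v.2.2.2)) (fun yw => (xz.1, yw.1, xz.2, yw.2))
    ?_ ?_ ?_ ?_
  · intro v hv
    simp only [mem_coe, mem_filter, mem_univ, true_and] at hv ⊢
    obtain ⟨⟨hQ, -⟩, rfl⟩ := hv
    exact hQ
  · intro yw hyw
    simp only [mem_coe, mem_filter, mem_univ, true_and] at hyw ⊢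
    exact ⟨⟨hyw, (mem_filter.mp hxz).2⟩, trivial⟩
  · intro v hv
    simp only [mem_coe, mem_filter, mem_univ, true_and] at hv
    rw [← hv.2]
  · intro yw _
    rfl

theorem card_dvd_and_dvd_mul_card_ker_sq (t : R) :
    #{xz : R × R | t ∣ xz.1 ∧ t ∣ xz.2} * Nat.card (AddMonoidHom.mulLeft t).ker ^ 2
      = Fintype.card R ^ 2 := by
  classical
  have := ((AddMonoidHom.mulLeft t).prodMap (AddMonoidHom.mulLeft t)).card_filter_map_mem univ
  rw [AddMonoidHom.card_ker_prodMap] at this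
  simp only [mem_univ, filter_true, card_univ, Fintype.card_prod, AddMonoidHom.range_prodMap,
    AddSubgroup.mem_prod, AddMonoidHom.mem_range_mulLeft] at this
  rw [sq, sq, this]

theorem card_hyperbolicForm_eq_mul_and_dvd (t c : R) :
    #{v : R × R × R × R | hyperbolicForm v = t * c ∧ t ∣ v.1 ∧ t ∣ v.2.2.1}
        * Nat.card (AddMonoidHom.mulLeft t).ker ^ 2
      = #{v : R × R × R × R | t * hyperbolicForm v = t * c} := by
  classical
  let μ := (AddMonoidHom.mulLeft t).prodMap ((AddMonoidHom.id R).prodMap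
    ((AddMonoidHom.mulLeft t).prodMap (AddMonoidHom.id R)))
  have hμ : ∀ v, hyperbolicForm (μ v) = t * hyperbolicForm v := fun v => by
    simp only [μ, hyperbolicForm, AddMonoidHom.coe_prodMap, AddMonoidHom.coe_mulLeft,
      AddMonoidHom.coe_id, Prod.map_fst, Prod.map_snd, id_eq]
    ring
  have hrange : ∀ v, v ∈ μ.range ↔ t ∣ v.1 ∧ t ∣ v.2.2.1 := fun v => by
    simp only [μ, AddMonoidHom.range_prodMap, AddSubgroup.mem_prod,
      AddMonoidHom.mem_range_mulLeft]
    simp only [AddMonoidHom.mem_range, AddMonoidHom.id_apply, exists_eq, true_and, and_true]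
  have hker : Nat.card μ.ker = Nat.card (AddMonoidHom.mulLeft t).ker ^ 2 := by
    simp only [μ, AddMonoidHom.card_ker_prodMap, AddMonoidHom.ker_id, AddSubgroup.card_bot,
      mul_one, one_mul, sq]
  have := μ.card_filter_map_mem {v | hyperbolicForm v = t * c}
  simp only [mem_filter, mem_univ, true_and, hμ, hrange, hker, filter_filter] at this
  rw [this]

end HyperbolicForm

namespace ZMod

variable {p : ℕ} [Fact p.Prime]

theorem isUnit_of_not_natCast_dvd {n : ℕ} (hn : n ≠ 0) {x : ZMod (p ^ n)}
    (hx : ¬ (p : ZMod (p ^ n)) ∣ x) : IsUnit x := by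
  rw [← natCast_zmod_val x] at hx ⊢
  rw [isUnit_natCast_iff_not_dvd_pow Fact.out (Nat.pos_of_ne_zero hn)]
  exact fun h => hx (Nat.cast_dvd_cast h)

theorem dvd_of_natCast_dvd_intCast {n : ℕ} (hn : n ≠ 0) {m : ℤ}
    (h : (p : ZMod (p ^ n)) ∣ (m : ZMod (p ^ n))) : (p : ℤ) ∣ m := by
  obtain ⟨c, hc⟩ := h
  have := congrArg (castHom (dvd_pow_self p hn) (ZMod p)) hc
  rwa [map_intCast, map_mul, map_natCast, natCast_self, zero_mul,
    intCast_zmod_eq_zero_iff_dvd] at this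

theorem natCast_mul_eq_zero_iff (k : ℕ) (u : ZMod (p ^ (k + 1))) :
    (p : ZMod (p ^ (k + 1))) * u = 0 ↔
      castHom (pow_dvd_pow p k.le_succ) (ZMod (p ^ k)) u = 0 := by
  obtain ⟨a, rfl⟩ := intCast_surjective u
  rw [map_intCast, ← Int.cast_natCast, ← Int.cast_mul, intCast_zmod_eq_zero_iff_dvd,
    intCast_zmod_eq_zero_iff_dvd, Nat.cast_pow, Nat.cast_pow, pow_succ',
    Int.mul_dvd_mul_iff_left (by exact_mod_cast (Fact.out : p.Prime).ne_zero)]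

theorem card_ker_castHom_pow_succ (k : ℕ) :
    Nat.card (castHom (pow_dvd_pow p k.le_succ) (ZMod (p ^ k))).toAddMonoidHom.ker = p := by
  set π := (castHom (pow_dvd_pow p k.le_succ) (ZMod (p ^ k))).toAddMonoidHom
  have := π.card_fiber_mul_card_of_surjective (castHom_surjective (pow_dvd_pow p k.le_succ)) 0
  rw [← map_zero π, π.card_fiber_eq_card_ker, card, card] at this
  exact Nat.eq_of_mul_eq_mul_right (pow_pos (Fact.out : p.Prime).pos k)
    (this.trans (pow_succ' p k))

theorem card_ker_mulLeft_natCast (k : ℕ) :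
    Nat.card (AddMonoidHom.mulLeft (p : ZMod (p ^ (k + 1)))).ker = p := by
  have hker : (AddMonoidHom.mulLeft (p : ZMod (p ^ (k + 1)))).ker
      = (castHom (pow_dvd_pow p k.le_succ) (ZMod (p ^ k))).toAddMonoidHom.ker := by
    ext u
    exact natCast_mul_eq_zero_iff k u
  rw [hker, card_ker_castHom_pow_succ]

end ZMod

noncomputable def repCount (n : ℕ) (c : ZMod n) : ℕ :=
  Nat.card {v : ZMod n × ZMod n × ZMod n × ZMod n // hyperbolicForm v = c}

theorem repCount_eq_card {n : ℕ} [NeZero n] (c : ZMod n) :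
    repCount n c = #{v | hyperbolicForm v = c} := by
  rw [repCount, Nat.card_eq_fintype_card, Fintype.card_subtype]

section PrimePower

open ZMod

variable {p : ℕ} [Fact p.Prime] (k : ℕ)

theorem card_natCast_mul_hyperbolicForm_eq (c : ZMod (p ^ (k + 1))) :
    #{v : ZMod (p ^ (k + 1)) × ZMod (p ^ (k + 1)) × ZMod (p ^ (k + 1)) × ZMod (p ^ (k + 1)) |
        (p : ZMod (p ^ (k + 1))) * hyperbolicForm v = p * c}
      = repCount (p ^ k) (castHom (pow_dvd_pow p k.le_succ) (ZMod (p ^ k)) c) * p ^ 4 := by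
  set π := castHom (pow_dvd_pow p k.le_succ) (ZMod (p ^ k))
  let π₄ := π.toAddMonoidHom.prodMap (π.toAddMonoidHom.prodMap
    (π.toAddMonoidHom.prodMap π.toAddMonoidHom))
  have hπ : Function.Surjective π := castHom_surjective _
  have hrange : π₄.range = ⊤ := AddMonoidHom.range_eq_top.mpr
    (hπ.prodMap (hπ.prodMap (hπ.prodMap hπ)))
  have hform : ∀ v, hyperbolicForm (π₄ v) = π (hyperbolicForm v) := fun v => by
    simp [π₄, hyperbolicForm]
  have hker : Nat.card π₄.ker = p ^ 4 := by
    have hπker : Nat.card π.toAddMonoidHom.ker = p := card_ker_castHom_pow_succ k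
    simp only [π₄, AddMonoidHom.card_ker_prodMap, hπker]
    ring
  have := π₄.card_filter_map_mem {u | hyperbolicForm u = π c}
  simp only [mem_filter, mem_univ, true_and, hform, hrange, AddSubgroup.mem_top, filter_true,
    hker] at this
  rw [repCount_eq_card, ← this]
  congr 1
  refine filter_congr fun v _ => ?_
  rw [← sub_eq_zero, ← mul_sub, natCast_mul_eq_zero_iff, map_sub, sub_eq_zero]

theorem card_natCast_dvd_and_dvd :
    #{xz : ZMod (p ^ (k + 1)) × ZMod (p ^ (k + 1)) | (p : ZMod (p ^ (k + 1))) ∣ xz.1 ∧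
      (p : ZMod (p ^ (k + 1))) ∣ xz.2} = p ^ (2 * k) := by
  have := card_dvd_and_dvd_mul_card_ker_sq (p : ZMod (p ^ (k + 1)))
  rw [card_ker_mulLeft_natCast, ZMod.card] at this
  exact Nat.eq_of_mul_eq_mul_right (pow_pos (Fact.out : p.Prime).pos 2) (this.trans (by ring))

theorem repCount_pow_succ_eq_add_card_dvd (c : ZMod (p ^ (k + 1))) :
    (repCount (p ^ (k + 1)) c : ℚ) = p ^ (3 * k + 3) - p ^ (3 * k + 1)
      + #{v | hyperbolicForm v = c ∧ (p : ZMod (p ^ (k + 1))) ∣ v.1 ∧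
          (p : ZMod (p ^ (k + 1))) ∣ v.2.2.1} := by
  have hunit := card_hyperbolicForm_eq_and_of_isUnit
    (fun xz : ZMod (p ^ (k + 1)) × ZMod (p ^ (k + 1)) => ¬ ((p : ZMod (p ^ (k + 1))) ∣ xz.1 ∧
      (p : ZMod (p ^ (k + 1))) ∣ xz.2))
    (fun xz hxz => (not_and_or.mp hxz).imp (isUnit_of_not_natCast_dvd k.succ_ne_zero)
      (isUnit_of_not_natCast_dvd k.succ_ne_zero)) c
  have hpairs := card_filter_add_card_filter_not (s := univ)
    (fun xz : ZMod (p ^ (k + 1)) × ZMod (p ^ (k + 1)) => (p : ZMod (p ^ (k + 1))) ∣ xz.1 ∧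
      (p : ZMod (p ^ (k + 1))) ∣ xz.2)
  rw [card_natCast_dvd_and_dvd, card_univ, Fintype.card_prod, ZMod.card] at hpairs
  rw [repCount_eq_card, ← card_filter_add_card_filter_not
    (fun v => (p : ZMod (p ^ (k + 1))) ∣ v.1 ∧ (p : ZMod (p ^ (k + 1))) ∣ v.2.2.1),
    filter_filter, filter_filter, hunit, ZMod.card]
  have hq : (#{xz : ZMod (p ^ (k + 1)) × ZMod (p ^ (k + 1)) |
      ¬ ((p : ZMod (p ^ (k + 1))) ∣ xz.1 ∧ (p : ZMod (p ^ (k + 1))) ∣ xz.2)} : ℚ)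
        = (p : ℚ) ^ (k + 1) * p ^ (k + 1) - p ^ (2 * k) := by
    rw [eq_sub_iff_add_eq']
    exact_mod_cast hpairs
  push_cast
  rw [hq]
  ring

theorem repCount_pow_succ_natCast_mul (m : ℤ) :
    (repCount (p ^ (k + 1)) ((p * m : ℤ) : ZMod (p ^ (k + 1))) : ℚ)
      = p ^ (3 * k + 3) - p ^ (3 * k + 1) + p ^ 2 * repCount (p ^ k) (m : ZMod (p ^ k)) := by
  have hdescent :=
    card_hyperbolicForm_eq_mul_and_dvd (p : ZMod (p ^ (k + 1))) (m : ZMod (p ^ (k + 1)))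
  rw [card_ker_mulLeft_natCast, card_natCast_mul_hyperbolicForm_eq, map_intCast] at hdescent
  have hdiv := Nat.eq_of_mul_eq_mul_right (pow_pos (Fact.out : p.Prime).pos 2)
    (hdescent.trans (by ring : _ = p ^ 2 * repCount (p ^ k) (m : ZMod (p ^ k)) * p ^ 2))
  rw [repCount_pow_succ_eq_add_card_dvd, Int.cast_mul, Int.cast_natCast, hdiv]
  push_cast
  ring

theorem repCount_pow_succ_of_not_dvd {m : ℤ} (hm : ¬ (p : ℤ) ∣ m) :
    (repCount (p ^ (k + 1)) (m : ZMod (p ^ (k + 1))) : ℚ)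
      = p ^ (3 * k + 3) - p ^ (3 * k + 1) := by
  rw [repCount_pow_succ_eq_add_card_dvd, add_eq_left, Nat.cast_eq_zero, card_eq_zero,
    filter_eq_empty_iff]
  rintro v - ⟨hform, hx, hz⟩
  refine hm (dvd_of_natCast_dvd_intCast k.succ_ne_zero ?_)
  rw [← hform]
  exact dvd_add (dvd_mul_of_dvd_left hx _) (dvd_mul_of_dvd_left hz _)

theorem repCount_pow_zero :
    (repCount (p ^ k) 0 : ℚ)
      = p ^ (3 * k) * (1 + (p : ℚ)⁻¹ - ((p : ℚ) ^ (k + 1))⁻¹) := by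
  have hp : (p : ℚ) ≠ 0 := Nat.cast_ne_zero.mpr (Fact.out : p.Prime).ne_zero
  induction k with
  | zero =>
    have : Subsingleton (ZMod (p ^ 0)) := ZMod.subsingleton_iff.mpr (pow_zero p)
    have : Nonempty {v : (ZMod (p ^ 0)) × ZMod (p ^ 0) × ZMod (p ^ 0) × ZMod (p ^ 0) //
      hyperbolicForm v = 0} := ⟨⟨0, Subsingleton.elim _ _⟩⟩
    rw [repCount, Nat.card_unique]
    simp
  | succ k ih =>
    have := repCount_pow_succ_natCast_mul (p := p) k 0
    rw [mul_zero, Int.cast_zero, Int.cast_zero, ih] at this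
    rw [this]
    field_simp
    ring

theorem repCount_pow_mul_of_not_dvd {m₀ : ℤ} (hm₀ : ¬ (p : ℤ) ∣ m₀) (j v : ℕ) :
    (repCount (p ^ (v + j + 1)) ((p ^ v * m₀ : ℤ) : ZMod (p ^ (v + j + 1))) : ℚ)
      = p ^ (3 * (v + j + 1)) * (1 + (p : ℚ)⁻¹) * (1 - ((p : ℚ) ^ (v + 1))⁻¹) := by
  have hp : (p : ℚ) ≠ 0 := Nat.cast_ne_zero.mpr (Fact.out : p.Prime).ne_zero
  induction v with
  | zero =>
    rw [pow_zero, one_mul, zero_add, repCount_pow_succ_of_not_dvd j hm₀]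
    field_simp
    ring
  | succ v ih =>
    rw [show v + 1 + j + 1 = v + j + 1 + 1 by ring, pow_succ' (p : ℤ), mul_assoc,
      repCount_pow_succ_natCast_mul, ih]
    field_simp
    ring

end PrimePower

theorem exists_eq_pow_padicValInt_mul {p : ℕ} [Fact p.Prime] {m : ℤ} (hm : m ≠ 0) :
    ∃ m₀, ¬ (p : ℤ) ∣ m₀ ∧ m = p ^ padicValInt p m * m₀ := by
  obtain ⟨m₀, hm₀⟩ := padicValInt_dvd (p := p) m
  refine ⟨m₀, fun ⟨c, hc⟩ => ?_, hm₀⟩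
  have hdvd : (p : ℤ) ^ (padicValInt p m + 1) ∣ m :=
    ⟨c, by rw [pow_succ, mul_assoc, ← hc]; exact hm₀⟩
  rw [padicValInt_dvd_iff] at hdvd
  omega

/-- Representation numbers of `U ⊕ U = (ℤ⁴, Q = x₁y₁ + x₂y₂)` modulo `p^ν`:
if `m ≠ 0` and `v_p(m) < ν` then `N^{U⊕U}_{m,0}(p^ν) = p^{3ν}(1+p⁻¹)(1-p^{-v_p(m)-1})`, and
if `m = 0` or `v_p(m) ≥ ν` then `N^{U⊕U}_{m,0}(p^ν) = p^{3ν}(1+p⁻¹-p^{-ν-1})`. -/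
theorem repNumber_two_hyperbolic_planes (p : ℕ) (hp : p.Prime) (ν : ℕ) (m : ℤ) :
    (if m ≠ 0 ∧ padicValInt p m < ν then
      (Nat.card {v : ZMod (p ^ ν) × ZMod (p ^ ν) × ZMod (p ^ ν) × ZMod (p ^ ν) //
          v.1 * v.2.1 + v.2.2.1 * v.2.2.2 = (m : ZMod (p ^ ν))} : ℚ)
        = (p : ℚ) ^ (3 * ν) * (1 + (p : ℚ)⁻¹) * (1 - (p : ℚ) ^ (-(padicValInt p m : ℤ) - 1))
    else
      (Nat.card {v : ZMod (p ^ ν) × ZMod (p ^ ν) × ZMod (p ^ ν) × ZMod (p ^ ν) //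
          v.1 * v.2.1 + v.2.2.1 * v.2.2.2 = (m : ZMod (p ^ ν))} : ℚ)
        = (p : ℚ) ^ (3 * ν) * (1 + (p : ℚ)⁻¹ - (p : ℚ) ^ (-(ν : ℤ) - 1))) := by
  have := Fact.mk hp
  have hzpow (n : ℕ) : (p : ℚ) ^ (-(n : ℤ) - 1) = ((p : ℚ) ^ (n + 1))⁻¹ := by
    rw [← zpow_natCast, ← zpow_neg]
    push_cast
    ring_nf
  split_ifs with h
  · obtain ⟨hm, hv⟩ := h
    obtain ⟨m₀, hm₀, hm_eq⟩ := exists_eq_pow_padicValInt_mul (p := p) hm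
    obtain ⟨j, rfl⟩ := Nat.exists_eq_add_of_lt hv
    have := repCount_pow_mul_of_not_dvd hm₀ j (padicValInt p m)
    rw [← hm_eq] at this
    rw [hzpow]
    exact this
  · have hzero : (m : ZMod (p ^ ν)) = 0 := by
      rw [ZMod.intCast_zmod_eq_zero_iff_dvd, Nat.cast_pow, padicValInt_dvd_iff]
      omega
    have := repCount_pow_zero (p := p) ν
    rw [← hzero] at this
    rw [hzpow]
    exact this
end

section
/- Let n ∈ ℕ and let Q₁ be a quadratic form on ℚ^n that takes integer values on ℤ^n. Let μ₁ ∈ ℚ^n be such that the polar bilinear form B of Q₁ satisfies B(μ₁,λ) ∈ ℤ for all λ ∈ ℤ^n, and let m ∈ ℚ with m − Q₁(μ₁) ∈ ℤ. For a prime p and ν ∈ ℕ, let N be the number of triples (λ, x, y), where λ ∈ ℤ^n has all coordinates in {0,…,p^ν−1} and x, y ∈ {0,…,p^ν−1}, such that Q₁(λ+μ₁) + x·y − m is an integer divisible by p^ν. Then (1 − 1/p)·p^{(n+1)ν} ≤ N ≤ (ν+1)·p^{(n+1)ν}. -/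
/-!
For fixed `λ`, integrality of `Q₁` and of `B(μ₁, ·)` on `ℤⁿ` makes `c = Q₁(λ + μ₁) - m` an
integer, so the count is a sum over `λ` of the number of pairs `(x, y)` modulo `q = p^ν` with
`c + xy ≡ 0 (mod q)`. A unit `x` admits a solution `y`, which gives at least
`φ(q) ≥ (1 - 1/p) q` pairs. For fixed `x` all solutions `y` are congruent modulo
`q / gcd(q, x)`, so there are at most `gcd(q, x)` of them, and
`∑_{x mod q} gcd(q, x) ≤ ∑_{d ∣ q} d · (q / d) = q · #divisors(q) = (ν + 1) q`.
-/

open Finset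

theorem Nat.card_subtype_prod_eq_sum {α β : Type*} [Fintype α] [Finite β] (P : α → β → Prop) :
    Nat.card {t : α × β // P t.1 t.2} = ∑ a, Nat.card {b // P a b} := by
  rw [Nat.card_congr (Equiv.subtypeProdEquivSigmaSubtype P), Nat.card_sigma]

theorem Nat.card_multiples_of_dvd {d q : ℕ} (hd : 0 < d) (hdq : d ∣ q) :
    #{x ∈ range q | d ∣ x} = q / d := by
  have h := Nat.count_modEq_card q hd 0
  rw [Nat.count_eq_card_filter_range, Nat.mod_eq_zero_of_dvd hdq] at h
  simpa [Nat.modEq_zero_iff_dvd] using h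

theorem Nat.card_le_div_of_forall_modEq {e q : ℕ} (heq : e ∣ q) {P : Fin q → Prop}
    (hP : ∀ y y', P y → P y' → (y : ℕ) ≡ y' [MOD e]) : Nat.card {y // P y} ≤ q / e := by
  have hlt (y : Fin q) : (y : ℕ) / e < q / e := Nat.div_lt_div_of_lt_of_dvd heq y.isLt
  refine (Nat.card_le_card_of_injective (fun y : {y // P y} => (⟨y.1 / e, hlt y⟩ : Fin (q / e)))
    ?_).trans_eq (Nat.card_fin _)
  intro y y' h
  have hdiv : (y : ℕ) / e = (y' : ℕ) / e := congrArg Fin.val h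
  have hmod : (y : ℕ) % e = (y' : ℕ) % e := hP _ _ y.2 y'.2
  ext
  rw [← Nat.div_add_mod (y : ℕ) e, ← Nat.div_add_mod (y' : ℕ) e, hdiv, hmod]

theorem Nat.sum_range_gcd_le_mul_card_divisors (q : ℕ) :
    ∑ x ∈ range q, q.gcd x ≤ q * #q.divisors := by
  calc ∑ x ∈ range q, q.gcd x ≤ ∑ x ∈ range q, ∑ d ∈ q.divisors, if d ∣ x then d else 0 := by
        refine sum_le_sum fun x hx => ?_
        have hmem : q.gcd x ∈ q.divisors :=
          Nat.mem_divisors.2 ⟨Nat.gcd_dvd_left q x, by have := mem_range.1 hx; omega⟩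
        calc q.gcd x = if q.gcd x ∣ x then q.gcd x else 0 := (if_pos (Nat.gcd_dvd_right q x)).symm
          _ ≤ _ := single_le_sum (f := fun d => if d ∣ x then d else 0)
            (fun d _ => Nat.zero_le _) hmem
    _ = ∑ d ∈ q.divisors, d * #{x ∈ range q | d ∣ x} := by
        rw [sum_comm]
        refine sum_congr rfl fun d _ => ?_
        rw [← sum_filter, sum_const, smul_eq_mul, mul_comm]
    _ = ∑ d ∈ q.divisors, q := sum_congr rfl fun d hd => by
        rw [Nat.card_multiples_of_dvd (Nat.pos_of_mem_divisors hd) (Nat.dvd_of_mem_divisors hd),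
          Nat.mul_div_cancel' (Nat.dvd_of_mem_divisors hd)]
    _ = q * #q.divisors := by rw [sum_const, smul_eq_mul, mul_comm]

theorem Nat.card_divisors_prime_pow {p : ℕ} (hp : p.Prime) (ν : ℕ) :
    #(p ^ ν).divisors = ν + 1 := by
  rw [← ArithmeticFunction.sigma_zero_apply, ArithmeticFunction.sigma_zero_apply_prime_pow hp]

theorem Nat.one_sub_one_div_mul_pow_le_totient {p : ℕ} (hp : p.Prime) (ν : ℕ) :
    (1 - 1 / (p : ℚ)) * p ^ ν ≤ (p ^ ν).totient := by
  rcases ν with _ | ν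
  · simp only [pow_zero, mul_one, Nat.totient_one, Nat.cast_one, sub_le_self_iff]
    positivity
  · refine le_of_eq ?_
    have hp0 : (p : ℚ) ≠ 0 := by exact_mod_cast hp.ne_zero
    rw [Nat.totient_prime_pow_succ hp, Nat.cast_mul, Nat.cast_sub hp.one_le]
    field_simp
    push_cast
    ring

theorem card_linear_congruence_solutions_le_gcd {q : ℕ} (hq : 0 < q) (c : ℤ) (x : ℕ) :
    Nat.card {y : Fin q // (q : ℤ) ∣ c + x * (y : ℕ)} ≤ q.gcd x := by
  have hdvd : q / q.gcd x ∣ q := Nat.div_dvd_of_dvd (Nat.gcd_dvd_left q x)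
  rw [← Nat.div_div_self (Nat.gcd_dvd_left q x) hq.ne']
  refine Nat.card_le_div_of_forall_modEq hdvd ?_
  intro y y' hy hy'
  have hxy : (x : ℤ) * (y : ℕ) ≡ x * (y' : ℕ) [ZMOD q] :=
    Int.ModEq.add_left_cancel' c
      ((Int.modEq_zero_iff_dvd.2 hy).trans (Int.modEq_zero_iff_dvd.2 hy').symm)
  have h := Int.ModEq.cancel_left_div_gcd (by exact_mod_cast hq) hxy
  rw [Int.gcd_natCast_natCast] at h
  exact Int.natCast_modEq_iff.1 (by exact_mod_cast h)

theorem exists_linear_congruence_solution_of_coprime {q : ℕ} (hq : 0 < q) (c : ℤ) {x : ℕ}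
    (hx : q.Coprime x) :
    ∃ y : Fin q, (q : ℤ) ∣ c + x * (y : ℕ) := by
  have : NeZero q := ⟨hq.ne'⟩
  refine ⟨⟨((x : ZMod q)⁻¹ * (-c : ℤ)).val, ZMod.val_lt _⟩, ?_⟩
  rw [← ZMod.intCast_zmod_eq_zero_iff_dvd]
  push_cast
  rw [ZMod.natCast_val, ZMod.cast_id', id, ← mul_assoc, ZMod.coe_mul_inv_eq_one x hx.symm]
  ring

noncomputable def hyperbolicRepCount (q : ℕ) (c : ℤ) : ℕ :=
  Nat.card {s : Fin q × Fin q // (q : ℤ) ∣ c + (s.1 : ℕ) * (s.2 : ℕ)}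

theorem hyperbolicRepCount_eq_sum (q : ℕ) (c : ℤ) :
    hyperbolicRepCount q c =
      ∑ x : Fin q, Nat.card {y : Fin q // (q : ℤ) ∣ c + (x : ℕ) * (y : ℕ)} :=
  Nat.card_subtype_prod_eq_sum fun x y : Fin q => (q : ℤ) ∣ c + (x : ℕ) * (y : ℕ)

theorem totient_le_hyperbolicRepCount {q : ℕ} (hq : 0 < q) (c : ℤ) :
    q.totient ≤ hyperbolicRepCount q c := by
  rw [hyperbolicRepCount_eq_sum, Nat.totient_eq_card_coprime, card_filter,
    ← Fin.sum_univ_eq_sum_range (fun x => if q.Coprime x then 1 else 0)]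
  refine sum_le_sum fun x _ => ?_
  split_ifs with hx
  · obtain ⟨y, hy⟩ := exists_linear_congruence_solution_of_coprime hq c hx
    exact Nat.card_pos_iff.2 ⟨⟨⟨y, hy⟩⟩, inferInstance⟩
  · exact Nat.zero_le _

theorem hyperbolicRepCount_le_mul_card_divisors {q : ℕ} (hq : 0 < q) (c : ℤ) :
    hyperbolicRepCount q c ≤ q * #q.divisors := by
  rw [hyperbolicRepCount_eq_sum]
  calc _ ≤ ∑ x : Fin q, q.gcd x :=
        sum_le_sum fun x _ => card_linear_congruence_solutions_le_gcd hq c x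
    _ = ∑ x ∈ range q, q.gcd x := Fin.sum_univ_eq_sum_range (q.gcd ·) q
    _ ≤ _ := Nat.sum_range_gcd_le_mul_card_divisors q

theorem card_eq_sum_hyperbolicRepCount {α : Type*} [Fintype α] {q : ℕ} (c : α → ℤ)
    {P : α × Fin q × Fin q → Prop} (hP : ∀ t, P t ↔ (q : ℤ) ∣ c t.1 + (t.2.1 : ℕ) * (t.2.2 : ℕ)) :
    Nat.card {t // P t} = ∑ a, hyperbolicRepCount q (c a) :=
  (Nat.card_subtype_prod_eq_sum fun a s => P (a, s)).trans
    (sum_congr rfl fun a _ => Nat.card_congr (Equiv.subtypeEquivRight fun s => hP (a, s)))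

theorem QuadraticMap.exists_intCast_eq_apply_add_sub {M : Type*} [AddCommGroup M] [Module ℚ M]
    (Q : QuadraticForm ℚ M) {v μ : M} {m : ℚ} (hv : ∃ z : ℤ, Q v = z)
    (hμv : ∃ z : ℤ, QuadraticMap.polar Q μ v = z) (hm : ∃ z : ℤ, m - Q μ = z) :
    ∃ z : ℤ, Q (v + μ) - m = z := by
  obtain ⟨a, ha⟩ := hv
  obtain ⟨b, hb⟩ := hμv
  obtain ⟨c, hc⟩ := hm
  refine ⟨a + b - c, ?_⟩
  rw [QuadraticMap.polar, add_comm μ] at hb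
  push_cast
  linarith

theorem exists_intCast_eq_and_dvd_iff {a : ℚ} {b d : ℤ} (h : a = b) :
    (∃ z : ℤ, a = z ∧ d ∣ z) ↔ d ∣ b :=
  ⟨fun ⟨_, hz, hd⟩ => Int.cast_injective (hz.symm.trans h) ▸ hd, fun hd => ⟨b, h, hd⟩⟩

/-- Representation number bounds for a lattice splitting off one hyperbolic plane:
if `Q₁` is an integral quadratic form on `ℤⁿ`, `μ₁` a dual vector and `m ≡ Q₁(μ₁) (mod ℤ)`,
then the number `N` of residues `(λ,x,y)` mod `p^ν` with `Q₁(λ+μ₁) + xy ≡ m (mod p^ν)`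
satisfies `(1-1/p) p^{(n+1)ν} ≤ N ≤ (ν+1) p^{(n+1)ν}`. -/
theorem repNumber_splits_one_hyperbolic_plane_bounds
    (n : ℕ) (Q₁ : QuadraticForm ℚ (Fin n → ℚ))
    (hQint : ∀ v : Fin n → ℤ, ∃ z : ℤ, Q₁ (fun i => (v i : ℚ)) = (z : ℚ))
    (μ₁ : Fin n → ℚ)
    (hμint : ∀ v : Fin n → ℤ, ∃ z : ℤ,
      QuadraticMap.polar Q₁ μ₁ (fun i => (v i : ℚ)) = (z : ℚ))
    (m : ℚ) (hm : ∃ z : ℤ, m - Q₁ μ₁ = (z : ℚ))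
    (p : ℕ) (hp : p.Prime) (ν : ℕ) :
    (1 - 1 / (p : ℚ)) * (p : ℚ) ^ ((n + 1) * ν) ≤
      (Nat.card {t : (Fin n → Fin (p ^ ν)) × Fin (p ^ ν) × Fin (p ^ ν) //
        ∃ z : ℤ, Q₁ (fun i => (t.1 i : ℚ) + μ₁ i) + (t.2.1 : ℚ) * (t.2.2 : ℚ) - m = (z : ℚ)
          ∧ (p : ℤ) ^ ν ∣ z} : ℚ) ∧
    (Nat.card {t : (Fin n → Fin (p ^ ν)) × Fin (p ^ ν) × Fin (p ^ ν) //
        ∃ z : ℤ, Q₁ (fun i => (t.1 i : ℚ) + μ₁ i) + (t.2.1 : ℚ) * (t.2.2 : ℚ) - m = (z : ℚ)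
          ∧ (p : ℤ) ^ ν ∣ z} : ℚ)
      ≤ (ν + 1) * (p : ℚ) ^ ((n + 1) * ν) := by
  have hq : 0 < p ^ ν := pow_pos hp.pos ν
  have hint (lam : Fin n → Fin (p ^ ν)) :
      ∃ z : ℤ, Q₁ (fun i => (lam i : ℚ) + μ₁ i) - m = z := by
    simpa [Pi.add_def] using
      Q₁.exists_intCast_eq_apply_add_sub (hQint fun i => ((lam i : ℕ) : ℤ)) (hμint _) hm
  choose c hc using hint
  rw [card_eq_sum_hyperbolicRepCount c fun t => ?iff]
  case iff =>
    rw [Nat.cast_pow]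
    exact exists_intCast_eq_and_dvd_iff (by push_cast [← hc]; ring)
  have hcard : #(univ : Finset (Fin n → Fin (p ^ ν))) = (p ^ ν) ^ n := by simp
  have hlow := hcard ▸ card_nsmul_le_sum univ _ _ fun lam _ =>
    totient_le_hyperbolicRepCount hq (c lam)
  have hup := hcard ▸ sum_le_card_nsmul univ _ _ fun lam _ =>
    hyperbolicRepCount_le_mul_card_divisors hq (c lam)
  rw [smul_eq_mul] at hlow
  rw [Nat.card_divisors_prime_pow hp, smul_eq_mul] at hup
  constructor
  · calc (1 - 1 / (p : ℚ)) * p ^ ((n + 1) * ν)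
          = ((p : ℚ) ^ ν) ^ n * ((1 - 1 / p) * p ^ ν) := by ring
      _ ≤ ((p : ℚ) ^ ν) ^ n * (p ^ ν).totient := by
          gcongr
          exact Nat.one_sub_one_div_mul_pow_le_totient hp ν
      _ ≤ _ := by exact_mod_cast hlow
  · calc _ ≤ (((p ^ ν) ^ n * (p ^ ν * (ν + 1)) : ℕ) : ℚ) := by exact_mod_cast hup
      _ = _ := by push_cast; ring
end

section
/- Let n ∈ ℕ and let Q be a quadratic form on ℚ^n that takes integer values on ℤ^n. Let μ ∈ ℚ^n be such that the polar bilinear form B of Q satisfies B(μ,λ) ∈ ℤ for all λ ∈ ℤ^n, and let m ∈ ℚ with m − Q(μ) ∈ ℤ. For a positive integer a, let N(a) be the number of vectors λ ∈ ℤ^n with all coordinates in {0,…,a−1} such that Q(λ+μ) − m is an integer divisible by a. Then for all coprime positive integers a and b one has N(a·b) = N(a)·N(b). -/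
/-- The representation number `N_{m,μ}(a)`: the number of residues `λ ∈ ℤⁿ/aℤⁿ`
(realized by representatives with coordinates in `{0,…,a-1}`) with `Q(λ+μ) ≡ m (mod a)`. -/
noncomputable def repNumber (n : ℕ) (Q : QuadraticForm ℚ (Fin n → ℚ)) (μ : Fin n → ℚ)
    (m : ℚ) (a : ℕ) : ℕ :=
  Nat.card {v : Fin n → Fin a //
    ∃ z : ℤ, Q (fun i => (v i : ℚ) + μ i) - m = (z : ℚ) ∧ (a : ℤ) ∣ z}

/-- The representation numbers `N_{m,μ}(a)` of an integral quadratic form `Q` on `ℤⁿ`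
(with `μ` a dual vector and `m ≡ Q(μ) (mod ℤ)`) are weakly multiplicative in `a`:
`N_{m,μ}(ab) = N_{m,μ}(a) N_{m,μ}(b)` for coprime positive integers `a`, `b`. -/
theorem repNumber_multiplicative
    (n : ℕ) (Q : QuadraticForm ℚ (Fin n → ℚ))
    (hQint : ∀ v : Fin n → ℤ, ∃ z : ℤ, Q (fun i => (v i : ℚ)) = (z : ℚ))
    (μ : Fin n → ℚ)
    (hμint : ∀ v : Fin n → ℤ, ∃ z : ℤ,
      QuadraticMap.polar Q μ (fun i => (v i : ℚ)) = (z : ℚ))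
    (m : ℚ) (hm : ∃ z : ℤ, m - Q μ = (z : ℚ))
    (a b : ℕ) (ha : 0 < a) (hb : 0 < b) (hab : Nat.Coprime a b) :
    repNumber n Q μ m (a * b) = repNumber n Q μ m a * repNumber n Q μ m b := by
  classical
  -- Q(w+μ) - m is an integer for every integer vector w
  have hInt : ∀ w : Fin n → ℤ, ∃ z : ℤ, Q (fun i => (w i : ℚ) + μ i) - m = (z : ℚ) := by
    intro w
    obtain ⟨z1, hz1⟩ := hQint w
    obtain ⟨z2, hz2⟩ := hμint w
    obtain ⟨z3, hz3⟩ := hm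
    refine ⟨z1 + z2 - z3, ?_⟩
    have h : (fun i => (w i : ℚ) + μ i) = μ + (fun i => (w i : ℚ)) := by
      funext i; simp [Pi.add_apply]; ring
    rw [h]
    have hpolar : QuadraticMap.polar Q μ (fun i => (w i : ℚ)) =
        Q (μ + fun i => (w i : ℚ)) - Q μ - Q (fun i => (w i : ℚ)) := rfl
    push_cast
    linarith [hpolar, hz1, hz2, hz3]
  choose F hF using hInt
  -- congruence: divisibility of F only depends on w mod c
  have hcong : ∀ (c : ℕ) (w w' : Fin n → ℤ), (∀ i, (c : ℤ) ∣ (w' i - w i)) →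
      ((c : ℤ) ∣ F w ↔ (c : ℤ) ∣ F w') := by
    intro c w w' hd
    suffices h : (c : ℤ) ∣ F w' - F w by
      constructor
      · intro h1; have := dvd_add h h1; simpa using this
      · intro h1; have := dvd_sub h1 h; simpa using this
    set u : Fin n → ℤ := fun i => (w' i - w i) / c with hu
    have hw' : ∀ i, w' i = w i + c * u i := by
      intro i
      have h1 := Int.ediv_mul_cancel (hd i)
      simp only [hu]
      linarith [mul_comm ((w' i - w i) / (c : ℤ)) (c : ℤ)]
    obtain ⟨za, hza⟩ := hQint (fun i => w i + u i)
    obtain ⟨zb, hzb⟩ := hQint w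
    obtain ⟨zc, hzc⟩ := hQint u
    obtain ⟨zd, hzd⟩ := hμint u
    have hx : (fun i => (w' i : ℚ) + μ i)
        = (fun i => (w i : ℚ) + μ i) + (c : ℚ) • (fun i => (u i : ℚ)) := by
      funext i
      simp only [Pi.add_apply, Pi.smul_apply, smul_eq_mul, hw' i]
      push_cast; ring
    have e1 : Q ((fun i => (w i : ℚ) + μ i) + (c : ℚ) • (fun i => (u i : ℚ)))
        = Q (fun i => (w i : ℚ) + μ i) + Q ((c : ℚ) • fun i => (u i : ℚ))
          + QuadraticMap.polar (⇑Q) (fun i => (w i : ℚ) + μ i)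
              ((c : ℚ) • fun i => (u i : ℚ)) := by
      simp only [QuadraticMap.polar]; ring
    have h2 : Q ((c : ℚ) • fun i => (u i : ℚ)) = (c : ℚ) * (c : ℚ) * zc := by
      rw [QuadraticMap.map_smul, smul_eq_mul, hzc]
    have h3 : QuadraticMap.polar (⇑Q) (fun i => (w i : ℚ) + μ i)
        ((c : ℚ) • fun i => (u i : ℚ)) = (c : ℚ) * ((za - zb - zc) + zd) := by
      rw [QuadraticMap.polar_smul_right, smul_eq_mul]
      congr 1
      have hsplit : (fun i => (w i : ℚ) + μ i) = (fun i => (w i : ℚ)) + μ := by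
        funext i; simp
      rw [hsplit, QuadraticMap.polar_add_left]
      have h4 : QuadraticMap.polar (⇑Q) (fun i => (w i : ℚ)) (fun i => (u i : ℚ))
          = (za : ℚ) - zb - zc := by
        have hsum : (fun i => (w i : ℚ)) + (fun i => (u i : ℚ))
            = fun i => ((w i + u i : ℤ) : ℚ) := by
          funext i; push_cast; simp
        have : QuadraticMap.polar (⇑Q) (fun i => (w i : ℚ)) (fun i => (u i : ℚ))
            = Q ((fun i => (w i : ℚ)) + fun i => (u i : ℚ))
              - Q (fun i => (w i : ℚ)) - Q (fun i => (u i : ℚ)) := rfl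
        rw [this, hsum, hza, hzb, hzc]
      rw [h4, hzd]
    have hFw' := hF w'
    have hFw := hF w
    rw [hx] at hFw'
    have key : ((F w' : ℚ)) - F w
        = (c : ℚ) * (c : ℚ) * zc + (c : ℚ) * ((za - zb - zc) + zd) := by
      linarith [hFw', hFw, e1, h2, h3]
    have keyz : F w' - F w = c * (c * zc + (za - zb - zc) + zd) := by
      have : ((F w' - F w : ℤ) : ℚ) = ((c * (c * zc + (za - zb - zc) + zd) : ℤ) : ℚ) := by
        push_cast
        linarith [key]
      exact_mod_cast this
    exact ⟨_, keyz⟩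
  -- rewrite repNumber via F
  have hrep : ∀ c : ℕ, repNumber n Q μ m c =
      Nat.card {v : Fin n → Fin c // (c : ℤ) ∣ F (fun i => (v i : ℤ))} := by
    intro c
    unfold repNumber
    apply Nat.card_congr
    apply Equiv.subtypeEquivRight
    intro v
    have harg : (fun i => ((v i : ℚ)) + μ i) = fun i => (((v i : ℤ) : ℚ)) + μ i := by
      funext i; push_cast; ring
    constructor
    · rintro ⟨z, hz, hdvd⟩
      have hz' : (z : ℚ) = (F (fun i => (v i : ℤ)) : ℚ) := by
        rw [← hz, ← hF (fun i => (v i : ℤ)), harg]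
      have : z = F (fun i => (v i : ℤ)) := by exact_mod_cast hz'
      rwa [← this]
    · intro hdvd
      refine ⟨F (fun i => (v i : ℤ)), ?_, hdvd⟩
      rw [harg]; exact hF _
  rw [hrep, hrep, hrep]
  have hab' : 0 < a * b := Nat.mul_pos ha hb
  have hcop : IsCoprime (a : ℤ) (b : ℤ) := hab.isCoprime
  -- reduction maps
  have hmod : ∀ (c : ℕ), 0 < c → ∀ (x : ℕ), (c : ℤ) ∣ (((x % c : ℕ) : ℤ) - (x : ℤ)) := by
    intro c hc x
    have h0 : ((x % c : ℕ) : ℤ) = (x : ℤ) % c := by push_cast; ring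
    rw [h0]
    refine ⟨-((x : ℤ) / c), ?_⟩
    rw [Int.emod_def]; ring
  let ra : Fin (a * b) → Fin a := fun x => ⟨(x : ℕ) % a, Nat.mod_lt _ ha⟩
  let rb : Fin (a * b) → Fin b := fun x => ⟨(x : ℕ) % b, Nat.mod_lt _ hb⟩
  have hresa : ∀ v : Fin n → Fin (a * b),
      ((a : ℤ) ∣ F (fun i => (v i : ℤ)) ↔ (a : ℤ) ∣ F (fun i => ((ra (v i) : ℤ)))) := by
    intro v
    exact hcong a _ _ (fun i => hmod a ha _)
  have hresb : ∀ v : Fin n → Fin (a * b),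
      ((b : ℤ) ∣ F (fun i => (v i : ℤ)) ↔ (b : ℤ) ∣ F (fun i => ((rb (v i) : ℤ)))) := by
    intro v
    exact hcong b _ _ (fun i => hmod b hb _)
  have hdvda : (a : ℤ) ∣ ((a * b : ℕ) : ℤ) := ⟨b, by push_cast; ring⟩
  have hdvdb : (b : ℤ) ∣ ((a * b : ℕ) : ℤ) := ⟨a, by push_cast; ring⟩
  let Φ : {v : Fin n → Fin (a * b) // (↑(a * b) : ℤ) ∣ F (fun i => (v i : ℤ))} →
      {v : Fin n → Fin a // (a : ℤ) ∣ F (fun i => (v i : ℤ))} ×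
      {v : Fin n → Fin b // (b : ℤ) ∣ F (fun i => (v i : ℤ))} :=
    fun v => (⟨fun i => ra (v.1 i), (hresa v.1).mp (dvd_trans hdvda v.2)⟩,
              ⟨fun i => rb (v.1 i), (hresb v.1).mp (dvd_trans hdvdb v.2)⟩)
  have hinj : Function.Injective Φ := by
    rintro ⟨v, hv⟩ ⟨v', hv'⟩ h
    simp only [Φ, Prod.mk.injEq, Subtype.mk.injEq] at h
    obtain ⟨h1, h2⟩ := h
    ext i
    have e1 : (v i : ℕ) % a = (v' i : ℕ) % a := congrArg (fun f => (f i : ℕ)) h1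
    have e2 : (v i : ℕ) % b = (v' i : ℕ) % b := congrArg (fun f => (f i : ℕ)) h2
    have hmab : (v i : ℕ) ≡ (v' i : ℕ) [MOD a * b] :=
      (Nat.modEq_and_modEq_iff_modEq_mul hab).mp ⟨e1, e2⟩
    have := hmab
    unfold Nat.ModEq at this
    rw [Nat.mod_eq_of_lt (v i).isLt, Nat.mod_eq_of_lt (v' i).isLt] at this
    exact this
  have hsurj : Function.Surjective Φ := by
    rintro ⟨⟨va, hva⟩, ⟨vb, hvb⟩⟩
    let k : Fin n → ℕ := fun i => (Nat.chineseRemainder hab (va i : ℕ) (vb i : ℕ) : ℕ)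
    let v : Fin n → Fin (a * b) := fun i => ⟨k i % (a * b), Nat.mod_lt _ hab'⟩
    have hka : ∀ i, (v i : ℕ) ≡ (va i : ℕ) [MOD a] := by
      intro i
      have h1 : (v i : ℕ) ≡ k i [MOD a * b] := Nat.mod_modEq _ _
      exact (h1.of_mul_right b).trans (Nat.chineseRemainder hab (va i : ℕ) (vb i : ℕ)).2.1
    have hkb : ∀ i, (v i : ℕ) ≡ (vb i : ℕ) [MOD b] := by
      intro i
      have h1 : (v i : ℕ) ≡ k i [MOD a * b] := Nat.mod_modEq _ _
      exact (h1.of_mul_left a).trans (Nat.chineseRemainder hab (va i : ℕ) (vb i : ℕ)).2.2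
    have hda : (a : ℤ) ∣ F (fun i => (v i : ℤ)) := by
      refine (hcong a (fun i => ((va i : ℕ) : ℤ)) (fun i => (v i : ℤ)) ?_).mp hva
      intro i
      exact ((hka i).symm.dvd : (a : ℤ) ∣ ((v i : ℕ) : ℤ) - ((va i : ℕ) : ℤ))
    have hdb : (b : ℤ) ∣ F (fun i => (v i : ℤ)) := by
      refine (hcong b (fun i => ((vb i : ℕ) : ℤ)) (fun i => (v i : ℤ)) ?_).mp hvb
      intro i
      exact ((hkb i).symm.dvd : (b : ℤ) ∣ ((v i : ℕ) : ℤ) - ((vb i : ℕ) : ℤ))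
    have hdab : (↑(a * b) : ℤ) ∣ F (fun i => (v i : ℤ)) := by
      have := hcop.mul_dvd hda hdb
      push_cast
      exact this
    refine ⟨⟨v, hdab⟩, ?_⟩
    simp only [Φ, Prod.mk.injEq, Subtype.mk.injEq]
    constructor
    · ext i
      show (v i : ℕ) % a = (va i : ℕ)
      have := hka i
      unfold Nat.ModEq at this
      rw [Nat.mod_eq_of_lt (va i).isLt] at this
      exact this
    · ext i
      show (v i : ℕ) % b = (vb i : ℕ)
      have := hkb i
      unfold Nat.ModEq at this
      rw [Nat.mod_eq_of_lt (vb i).isLt] at this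
      exact this
  rw [Nat.card_congr (Equiv.ofBijective Φ ⟨hinj, hsurj⟩), Nat.card_prod]
end

section
/- Let k be a real number with k ≥ 5/2, let f be a positive integer, and let χ : ℕ → ℝ be any function with χ(1) = 1 and |χ(g)| ≤ 1 for all g. Then Σ_{g ∣ f} μ(g)·χ(g)·g^{1/2−k}·σ_{2−2k}(f/g) ≥ 1 − (ζ(2) − 1)·ζ(3), and moreover 1 − (ζ(2) − 1)·ζ(3) ≥ 1/5. Here μ is the Möbius function, the sum runs over the positive divisors g of f, ζ(2) = π²/6 and ζ(3) = Σ_{n ≥ 1} 1/n³. -/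
/-!
The term `g = 1` equals `σ_{2-2k}(f) ≥ 1`. Every other term has absolute value at most
`g^{1/2-k} σ_{2-2k}(f/g) ≤ g⁻² ζ(3)`, because `k ≥ 5/2` makes `σ_{2-2k}(m) ≤ Σ_{d ∣ m} d⁻³ ≤ ζ(3)`;
summing over the divisors `g ≥ 2` of `f` costs at most `(ζ(2) - 1) ζ(3)`. The numerical bound
follows from `π < 3.15` and `ζ(3) ≤ 1 + 1/8 + 1/12`, the tail being telescoped against
`1/n³ ≤ 1/((n-1)n(n+1))`.
-/

open Real
open scoped BigOperators

/-- The Riemann zeta value `ζ(3) = Σ_{n ≥ 1} 1/n³`. -/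
noncomputable def zetaThree : ℝ := ∑' n : ℕ, 1 / ((n : ℝ) + 1) ^ 3

lemma summable_one_div_nat_add_one_pow_three :
    Summable fun n : ℕ => 1 / ((n : ℝ) + 1) ^ 3 := by
  exact_mod_cast (summable_nat_add_iff 1).mpr (Real.summable_one_div_nat_pow.mpr (by norm_num))

lemma zetaThree_nonneg : 0 ≤ zetaThree :=
  tsum_nonneg fun _ => by positivity

-- The `n = 0` term is `1 / 0 = 0`.
lemma zetaThree_eq_tsum_one_div_nat_pow : zetaThree = ∑' n : ℕ, 1 / (n : ℝ) ^ 3 := by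
  rw [(Real.summable_one_div_nat_pow.mpr (by norm_num)).tsum_eq_zero_add, zetaThree]
  simp

lemma one_div_add_three_pow_three_le (x : ℝ) (hx : 0 ≤ x) :
    1 / (x + 3) ^ 3 ≤ 1 / (2 * (x + 2) * (x + 3)) - 1 / (2 * (x + 3) * (x + 4)) := by
  rw [div_sub_div _ _ (by positivity) (by positivity),
    div_le_div_iff₀ (by positivity) (by positivity)]
  nlinarith [pow_nonneg hx 2, pow_nonneg hx 3, pow_nonneg hx 4]

lemma tsum_one_div_nat_add_three_pow_three_le :
    ∑' n : ℕ, 1 / ((n : ℝ) + 3) ^ 3 ≤ 1 / 12 := by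
  refine Real.tsum_le_of_sum_range_le (fun _ => by positivity) fun n => ?_
  set a : ℕ → ℝ := fun j => 1 / (2 * ((j : ℝ) + 2) * ((j : ℝ) + 3))
  calc ∑ i ∈ Finset.range n, 1 / ((i : ℝ) + 3) ^ 3
      ≤ ∑ i ∈ Finset.range n, (a i - a (i + 1)) :=
        Finset.sum_le_sum fun i _ => by
          have := one_div_add_three_pow_three_le i i.cast_nonneg
          simp only [a, Nat.cast_add_one]
          ring_nf at this ⊢
          linarith
    _ = a 0 - a n := Finset.sum_range_sub' a n
    _ ≤ 1 / 12 := by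
        have : 0 ≤ a n := by positivity
        norm_num [a] at this ⊢
        linarith

lemma zetaThree_le : zetaThree ≤ 29 / 24 := by
  rw [zetaThree, ← summable_one_div_nat_add_one_pow_three.sum_add_tsum_nat_add 2]
  have htail := tsum_one_div_nat_add_three_pow_three_le
  norm_num [Finset.sum_range_succ, add_assoc] at htail ⊢
  linarith

lemma one_fifth_le_one_sub_mul_zetaThree : (1 : ℝ) / 5 ≤ 1 - (π ^ 2 / 6 - 1) * zetaThree := by
  have hπ : π ^ 2 / 6 - 1 ≤ 0.65375 := by nlinarith [pi_lt_d2, pi_gt_three]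
  have := mul_le_mul hπ zetaThree_le zetaThree_nonneg (by norm_num)
  linarith

lemma rpow_le_one_div_pow {x s : ℝ} (hx : 1 ≤ x) {n : ℕ} (hs : s ≤ -n) :
    x ^ s ≤ 1 / x ^ n := by
  rw [one_div, ← rpow_natCast, ← rpow_neg (by positivity)]
  exact rpow_le_rpow_of_exponent_le hx hs

lemma sum_divisors_rpow_le_zetaThree {s : ℝ} (hs : s ≤ -3) (m : ℕ) :
    ∑ d ∈ m.divisors, (d : ℝ) ^ s ≤ zetaThree := by
  calc ∑ d ∈ m.divisors, (d : ℝ) ^ s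
      ≤ ∑ d ∈ m.divisors, 1 / (d : ℝ) ^ 3 :=
        Finset.sum_le_sum fun d hd =>
          rpow_le_one_div_pow (by exact_mod_cast Nat.pos_of_mem_divisors hd) (by exact_mod_cast hs)
    _ ≤ ∑' n : ℕ, 1 / (n : ℝ) ^ 3 :=
        (Real.summable_one_div_nat_pow.mpr (by norm_num)).sum_le_tsum _ fun _ _ => by positivity
    _ = zetaThree := zetaThree_eq_tsum_one_div_nat_pow.symm

lemma one_le_sum_divisors_rpow {m : ℕ} (hm : m ≠ 0) (s : ℝ) :
    1 ≤ ∑ d ∈ m.divisors, (d : ℝ) ^ s := by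
  simpa using Finset.single_le_sum (fun d _ => rpow_nonneg d.cast_nonneg s)
    (Nat.one_mem_divisors.mpr hm)

lemma sum_erase_one_one_div_sq_le (s : Finset ℕ) :
    ∑ g ∈ s.erase 1, 1 / (g : ℝ) ^ 2 ≤ π ^ 2 / 6 - 1 := by
  have := hasSum_zeta_two.summable.sum_le_tsum (insert 1 (s.erase 1)) fun _ _ => by positivity
  rw [Finset.sum_insert (Finset.notMem_erase 1 s), hasSum_zeta_two.tsum_eq] at this
  simp only [Nat.cast_one, one_pow, div_one] at this
  linarith

lemma neg_le_mul_of_abs_le_one {c x y : ℝ} (hc : |c| ≤ 1) (hx : 0 ≤ x) (hxy : x ≤ y) :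
    -y ≤ c * x := by
  nlinarith [(abs_le.mp hc).1]

section TwistedTerm

variable {k : ℝ} (hk : 5 / 2 ≤ k) {χ : ℕ → ℝ} (hχ : ∀ g, |χ g| ≤ 1)
include hk

lemma rpow_mul_sum_divisors_rpow_le {g : ℕ} (hg : 0 < g) (m : ℕ) :
    (g : ℝ) ^ (1 / 2 - k) * ∑ d ∈ m.divisors, (d : ℝ) ^ (2 - 2 * k)
      ≤ 1 / (g : ℝ) ^ 2 * zetaThree :=
  mul_le_mul
    (rpow_le_one_div_pow (by exact_mod_cast hg) (by push_cast; linarith))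
    (sum_divisors_rpow_le_zetaThree (by linarith) m)
    (Finset.sum_nonneg fun d _ => rpow_nonneg d.cast_nonneg _)
    (by positivity)

include hχ

lemma neg_le_twisted_term {g : ℕ} (hg : 0 < g) (m : ℕ) :
    -(1 / (g : ℝ) ^ 2 * zetaThree)
      ≤ (ArithmeticFunction.moebius g : ℝ) * χ g * (g : ℝ) ^ (1 / 2 - k)
          * ∑ d ∈ m.divisors, (d : ℝ) ^ (2 - 2 * k) := by
  have hμ : |(ArithmeticFunction.moebius g : ℝ)| ≤ 1 := by
    exact_mod_cast ArithmeticFunction.abs_moebius_le_one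
  rw [mul_assoc]
  refine neg_le_mul_of_abs_le_one ?_ ?_ (rpow_mul_sum_divisors_rpow_le hk hg m)
  · rw [abs_mul]
    exact mul_le_one₀ hμ (abs_nonneg _) (hχ g)
  · exact mul_nonneg (rpow_nonneg g.cast_nonneg _)
      (Finset.sum_nonneg fun d _ => rpow_nonneg d.cast_nonneg _)

lemma neg_le_sum_erase_one_twisted_terms (f : ℕ) :
    -((π ^ 2 / 6 - 1) * zetaThree)
      ≤ ∑ g ∈ f.divisors.erase 1, (ArithmeticFunction.moebius g : ℝ) * χ g
          * (g : ℝ) ^ (1 / 2 - k) * ∑ d ∈ (f / g).divisors, (d : ℝ) ^ (2 - 2 * k) :=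
  calc -((π ^ 2 / 6 - 1) * zetaThree)
      ≤ -((∑ g ∈ f.divisors.erase 1, 1 / (g : ℝ) ^ 2) * zetaThree) :=
        neg_le_neg (mul_le_mul_of_nonneg_right (sum_erase_one_one_div_sq_le _) zetaThree_nonneg)
    _ = ∑ g ∈ f.divisors.erase 1, -(1 / (g : ℝ) ^ 2 * zetaThree) := by
        rw [Finset.sum_mul, Finset.sum_neg_distrib]
    _ ≤ _ := Finset.sum_le_sum fun g hg =>
        neg_le_twisted_term hk hχ (Nat.pos_of_mem_divisors (Finset.mem_of_mem_erase hg)) _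

end TwistedTerm

/-- For `k ≥ 5/2` and any function `χ` with `χ(1) = 1` and `|χ| ≤ 1`, the twisted sum
`Σ_{g ∣ f} μ(g) χ(g) g^{1/2-k} σ_{2-2k}(f/g)` is at least `1 - (ζ(2)-1)ζ(3) ≥ 1/5`. -/
theorem twisted_divisor_sum_lower_bound
    (k : ℝ) (hk : 5 / 2 ≤ k) (f : ℕ) (hf : 0 < f)
    (χ : ℕ → ℝ) (hχ1 : χ 1 = 1) (hχ : ∀ g, |χ g| ≤ 1) :
    1 - (π ^ 2 / 6 - 1) * zetaThree ≤
      ∑ g ∈ f.divisors, (ArithmeticFunction.moebius g : ℝ) * χ g * (g : ℝ) ^ (1 / 2 - k)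
        * ∑ d ∈ (f / g).divisors, (d : ℝ) ^ (2 - 2 * k) ∧
    (1 : ℝ) / 5 ≤ 1 - (π ^ 2 / 6 - 1) * zetaThree := by
  refine ⟨?_, one_fifth_le_one_sub_mul_zetaThree⟩
  rw [← Finset.add_sum_erase _ _ (Nat.one_mem_divisors.mpr hf.ne')]
  simp only [Nat.cast_one, ArithmeticFunction.moebius_apply_one, Int.cast_one, hχ1, one_mul,
    one_rpow, Nat.div_one, mul_one]
  have hmain := one_le_sum_divisors_rpow hf.ne' (2 - 2 * k)
  have hrest := neg_le_sum_erase_one_twisted_terms hk hχ f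
  linarith
end

section
/- The family (1 + 1/(p(p−1)))_{p prime} is multipliable, and the product over all primes satisfies Π_{p prime} (1 + 1/(p(p−1))) = (315/(2π⁴))·ζ(3), where ζ(3) = Σ_{n ≥ 1} 1/n³. (This value is Landau's totient constant, equal to 1.943596… .) -/
open Real

theorem bernoulli'_five : bernoulli' 5 = 0 := by
  rw [bernoulli'_def]
  norm_num [Finset.sum_range_succ, Nat.choose]

theorem bernoulli_six : bernoulli 6 = 1 / 42 := by
  rw [bernoulli_eq_bernoulli'_of_ne_one (by decide), bernoulli'_def]
  norm_num [Finset.sum_range_succ, Nat.choose, bernoulli'_five]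

theorem hasSum_zeta_six : HasSum (fun n : ℕ => (1 : ℝ) / (n : ℝ) ^ 6) (π ^ 6 / 945) := by
  convert! hasSum_zeta_nat three_ne_zero using 1
  rw [bernoulli_six]
  simp [Nat.factorial]
  ring

lemma tsum_one_div_nat_pow_three : ∑' n : ℕ, 1 / (n : ℝ) ^ 3 = zetaThree := by
  rw [(summable_one_div_nat_pow.mpr (by norm_num)).tsum_eq_zero_add, zetaThree]
  simp

lemma hasProd_primes_one_sub_inv_pow_inv {k : ℕ} (hk : 2 ≤ k) :
    HasProd (fun p : Nat.Primes => (1 - ((p : ℝ) ^ k)⁻¹)⁻¹) (∑' n : ℕ, 1 / (n : ℝ) ^ k) := by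
  let f : ℕ →*₀ ℝ := (powMonoidWithZeroHom (by omega : k ≠ 0)).comp
    (invMonoidWithZeroHom.comp (Nat.castRingHom ℝ).toMonoidWithZeroHom)
  have hf (n : ℕ) : f n = 1 / (n : ℝ) ^ k := by simp [f, invMonoidWithZeroHom]
  have hsum : Summable (‖f ·‖) := by
    simpa [hf] using summable_one_div_nat_pow.mpr hk
  simpa only [hf, one_div] using EulerProduct.eulerProduct_completely_multiplicative_hasProd hsum

lemma one_add_one_div_mul_sub_one_eq {x : ℝ} (hx : 1 < x) :
    1 + 1 / (x * (x - 1)) = (1 - (x ^ 2)⁻¹)⁻¹ * (1 - (x ^ 3)⁻¹)⁻¹ / (1 - (x ^ 6)⁻¹)⁻¹ := by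
  have h0 : x ≠ 0 := by linarith
  have h1 : x - 1 ≠ 0 := by linarith
  have h2 : x ^ 2 - 1 ≠ 0 := by nlinarith
  have h3 : x ^ 3 - 1 ≠ 0 := by nlinarith [pow_lt_pow_left₀ hx zero_le_one three_ne_zero]
  have h6 : x ^ 6 - 1 ≠ 0 := by nlinarith [pow_lt_pow_left₀ hx zero_le_one (by norm_num : 6 ≠ 0)]
  field_simp
  ring

/-- Landau's totient constant: the product over all primes
`Π_p (1 + 1/(p(p-1)))` converges and equals `(315/(2π⁴)) ζ(3)`. -/
theorem landau_totient_constant :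
    Multipliable (fun p : Nat.Primes => 1 + 1 / ((p : ℝ) * ((p : ℝ) - 1))) ∧
    ∏' p : Nat.Primes, (1 + 1 / ((p : ℝ) * ((p : ℝ) - 1))) =
      315 / (2 * Real.pi ^ 4) * zetaThree := by
  have hzeta6 : ∑' n : ℕ, 1 / (n : ℝ) ^ 6 = π ^ 6 / 945 := hasSum_zeta_six.tsum_eq
  have hprod := ((hasProd_primes_one_sub_inv_pow_inv (k := 2) le_rfl).mul
    (hasProd_primes_one_sub_inv_pow_inv (k := 3) (by norm_num))).div₀
    (hasProd_primes_one_sub_inv_pow_inv (k := 6) (by norm_num)) (by rw [hzeta6]; positivity)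
  have hvalue : π ^ 2 / 6 * zetaThree / (π ^ 6 / 945) = 315 / (2 * π ^ 4) * zetaThree := by
    field_simp
    ring
  rw [hasSum_zeta_two.tsum_eq, tsum_one_div_nat_pow_three, hzeta6, hvalue] at hprod
  have hlandau := hprod.congr_fun fun p : Nat.Primes =>
    one_add_one_div_mul_sub_one_eq (by exact_mod_cast p.prop.one_lt)
  exact ⟨hlandau.multipliable, hlandau.tprod_eq⟩
end

section
/- The family (1 − 1/(p(p−1)))_{p prime} is multipliable, its product A = Π_{p prime} (1 − 1/(p(p−1))) (Artin's constant) satisfies A > 0, and moreover Π_{p prime} (1 + 1/(p(p−1))) − Π_{p prime} (1 − 1/(p(p−1))) < 2. -/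
/-!
Write `a p = 1 / (p (p - 1))`. For an odd prime `p = 2k + 1` one has
`a p ≤ 1 / (3k(k + 1)) = (1/3) (1/k - 1/(k + 1))`, so `∑ a p ≤ 1/2 + 1/3 = 5/6`.
Weierstrass' inequality `∏ (1 - a p) ≥ 1 - ∑ a p ≥ 1/6` gives positivity of Artin's constant,
and `1 + x ≤ exp x` for the odd primes gives `∏ (1 + a p) ≤ (3/2) exp (1/3) < 13/6`;
the difference is therefore below `13/6 - 1/6 = 2`.
-/

open Real Function

section InfiniteProducts

variable {ι : Type*} {a : ι → ℝ}

theorem Finset.one_sub_sum_le_prod_one_sub (s : Finset ι) (h0 : ∀ i ∈ s, 0 ≤ a i)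
    (h1 : ∀ i ∈ s, a i ≤ 1) : 1 - ∑ i ∈ s, a i ≤ ∏ i ∈ s, (1 - a i) := by
  classical
  induction s using Finset.induction_on with
  | empty => simp
  | insert j s hj ih =>
    rw [Finset.sum_insert hj, Finset.prod_insert hj]
    have ih := ih (fun i hi => h0 i (Finset.mem_insert_of_mem hi))
      (fun i hi => h1 i (Finset.mem_insert_of_mem hi))
    have hsum : 0 ≤ ∑ i ∈ s, a i :=
      Finset.sum_nonneg fun i hi => h0 i (Finset.mem_insert_of_mem hi)
    nlinarith [h0 j (s.mem_insert_self j),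
      mul_le_mul_of_nonneg_left ih (sub_nonneg.2 (h1 j (s.mem_insert_self j)))]

theorem Real.multipliable_one_sub_of_summable (hs : Summable a) :
    Multipliable fun i => 1 - a i := by
  simpa only [sub_eq_add_neg] using Real.multipliable_one_add_of_summable hs.neg

theorem Real.one_sub_tsum_le_tprod_one_sub (hs : Summable a) (h0 : ∀ i, 0 ≤ a i)
    (h1 : ∀ i, a i ≤ 1) : 1 - ∑' i, a i ≤ ∏' i, (1 - a i) :=
  ge_of_tendsto' (multipliable_one_sub_of_summable hs).hasProd fun s =>
    (sub_le_sub_left (hs.sum_le_tsum s fun i _ => h0 i) 1).trans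
      (s.one_sub_sum_le_prod_one_sub (fun i _ => h0 i) fun i _ => h1 i)

theorem Real.tprod_one_add_le_exp_tsum (hs : Summable a) (h0 : ∀ i, 0 ≤ a i) :
    ∏' i, (1 + a i) ≤ exp (∑' i, a i) :=
  (Real.multipliable_one_add_of_summable hs).tprod_le_of_prod_le fun s =>
    (prod_one_add_le_exp_sum s h0).trans (exp_le_exp.2 (hs.sum_le_tsum s fun i _ => h0 i))

theorem Real.tprod_one_add_le_mul_exp_tsum_sub [DecidableEq ι] (hs : Summable a)
    (h0 : ∀ i, 0 ≤ a i) (i : ι) :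
    ∏' j, (1 + a j) ≤ (1 + a i) * exp (∑' j, a j - a i) := by
  have hite : ∀ j, ite (j = i) 1 (1 + a j) = 1 + update a i 0 j := fun j => by
    by_cases hj : j = i <;> simp [hj]
  have hM : Multipliable (update (fun j => 1 + a j) i 1) := by
    convert Real.multipliable_one_add_of_summable (hs.update i 0) using 1
    ext j
    rw [update_apply, hite]
  have hsum : ∑' j, update a i 0 j = ∑' j, a j - a i := by
    rw [(hs.hasSum.update i 0).tsum_eq, zero_sub, neg_add_eq_sub]
  rw [Multipliable.tprod_eq_mul_tprod_ite' i hM, tprod_congr hite, ← hsum]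
  refine mul_le_mul_of_nonneg_left (tprod_one_add_le_exp_tsum (hs.update i 0) fun j => ?_)
    (by linarith [h0 i])
  by_cases hj : j = i <;> simp [hj, h0 j]

end InfiniteProducts

theorem Real.exp_one_third_lt : exp (1 / 3) < 13 / 9 := by
  have h : exp (1 / 3) ^ 3 < (13 / 9) ^ 3 := by
    rw [← exp_nat_mul, show ((3 : ℕ) : ℝ) * (1 / 3) = 1 by norm_num]
    exact exp_one_lt_d9.trans (by norm_num)
  exact lt_of_pow_lt_pow_left₀ 3 (by norm_num) h

/-- Dominates `1 / (p (p - 1))` at `k = (p - 1) / 2` for every prime `p` (the value at `k = 0`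
is for `p = 2`), and telescopes to `5 / 6`. -/
noncomputable def artinMajorant (k : ℕ) : ℝ :=
  if k = 0 then 1 / 2 else 1 / (3 * k * (k + 1))

theorem artinMajorant_nonneg (k : ℕ) : 0 ≤ artinMajorant k := by
  unfold artinMajorant
  split_ifs <;> positivity

theorem sum_range_succ_artinMajorant (n : ℕ) :
    ∑ k ∈ Finset.range (n + 1), artinMajorant k = 5 / 6 - 1 / (3 * (n + 1)) := by
  induction n with
  | zero => norm_num [artinMajorant]
  | succ n ih =>
    rw [Finset.sum_range_succ, ih, artinMajorant, if_neg n.succ_ne_zero]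
    push_cast
    field_simp
    ring

theorem sum_range_artinMajorant_le (n : ℕ) : ∑ k ∈ Finset.range n, artinMajorant k ≤ 5 / 6 := by
  cases n with
  | zero => norm_num
  | succ n =>
    rw [sum_range_succ_artinMajorant]
    have : (0 : ℝ) ≤ 1 / (3 * (n + 1)) := by positivity
    linarith

theorem summable_artinMajorant : Summable artinMajorant :=
  summable_of_sum_range_le artinMajorant_nonneg sum_range_artinMajorant_le

theorem tsum_artinMajorant_le : ∑' k, artinMajorant k ≤ 5 / 6 :=
  Real.tsum_le_of_sum_range_le artinMajorant_nonneg sum_range_artinMajorant_le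

namespace Nat.Primes

theorem injective_sub_one_div_two : Injective fun p : Nat.Primes => ((p : ℕ) - 1) / 2 := by
  have key : ∀ p : Nat.Primes,
      (p : ℕ) = 2 ∨ 3 ≤ (p : ℕ) ∧ (p : ℕ) = 2 * (((p : ℕ) - 1) / 2) + 1 := by
    intro p
    rcases p.2.eq_two_or_odd' with h | ⟨k, hk⟩
    · exact Or.inl h
    · have := p.2.two_le
      omega
  intro p q h
  apply Nat.Primes.coe_nat_injective
  simp only at h
  rcases key p with hp | hp <;> rcases key q with hq | hq <;> omega

theorem one_le_mul_sub_one (p : Nat.Primes) : 1 ≤ (p : ℝ) * ((p : ℝ) - 1) := by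
  have : (2 : ℝ) ≤ p := by exact_mod_cast p.2.two_le
  nlinarith

theorem one_div_mul_sub_one_nonneg (p : Nat.Primes) : 0 ≤ 1 / ((p : ℝ) * ((p : ℝ) - 1)) :=
  one_div_nonneg.2 (zero_le_one.trans (one_le_mul_sub_one p))

theorem one_div_mul_sub_one_le_one (p : Nat.Primes) : 1 / ((p : ℝ) * ((p : ℝ) - 1)) ≤ 1 :=
  (div_le_one (zero_lt_one.trans_le (one_le_mul_sub_one p))).2 (one_le_mul_sub_one p)

theorem one_div_mul_sub_one_le_artinMajorant (p : Nat.Primes) :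
    1 / ((p : ℝ) * ((p : ℝ) - 1)) ≤ artinMajorant (((p : ℕ) - 1) / 2) := by
  rcases p.2.eq_two_or_odd' with h | ⟨k, hk⟩
  · rw [h]
    norm_num [artinMajorant]
  · have hk0 : k ≠ 0 := by
      rintro rfl
      exact Nat.not_prime_one (by simpa [hk] using p.2)
    have hkp : ((p : ℕ) - 1) / 2 = k := by omega
    have hk1 : (1 : ℝ) ≤ k := by exact_mod_cast Nat.one_le_iff_ne_zero.2 hk0
    rw [hkp, artinMajorant, if_neg hk0, hk]
    push_cast
    exact one_div_le_one_div_of_le (by positivity) (by nlinarith)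

theorem summable_one_div_mul_sub_one :
    Summable fun p : Nat.Primes => 1 / ((p : ℝ) * ((p : ℝ) - 1)) :=
  (summable_artinMajorant.comp_injective injective_sub_one_div_two).of_nonneg_of_le
    one_div_mul_sub_one_nonneg one_div_mul_sub_one_le_artinMajorant

theorem tsum_one_div_mul_sub_one_le :
    ∑' p : Nat.Primes, 1 / ((p : ℝ) * ((p : ℝ) - 1)) ≤ 5 / 6 :=
  (summable_one_div_mul_sub_one.tsum_le_tsum_of_inj _ injective_sub_one_div_two
    (fun k _ => artinMajorant_nonneg k) one_div_mul_sub_one_le_artinMajorant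
    summable_artinMajorant).trans tsum_artinMajorant_le

end Nat.Primes

/-- Artin's constant `A = Π_p (1 - 1/(p(p-1)))` converges, is positive, and differs from
Landau's totient constant `Π_p (1 + 1/(p(p-1)))` by less than `2`. -/
theorem artin_constant_positive_and_difference_lt_two :
    Multipliable (fun p : Nat.Primes => 1 - 1 / ((p : ℝ) * ((p : ℝ) - 1))) ∧
    0 < ∏' p : Nat.Primes, (1 - 1 / ((p : ℝ) * ((p : ℝ) - 1))) ∧
    (∏' p : Nat.Primes, (1 + 1 / ((p : ℝ) * ((p : ℝ) - 1)))) -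
      (∏' p : Nat.Primes, (1 - 1 / ((p : ℝ) * ((p : ℝ) - 1)))) < 2 := by
  have hs := Nat.Primes.summable_one_div_mul_sub_one
  have hS := Nat.Primes.tsum_one_div_mul_sub_one_le
  have hQ := Real.one_sub_tsum_le_tprod_one_sub hs Nat.Primes.one_div_mul_sub_one_nonneg
    Nat.Primes.one_div_mul_sub_one_le_one
  have hP : ∏' p : Nat.Primes, (1 + 1 / ((p : ℝ) * ((p : ℝ) - 1))) ≤
      3 / 2 * exp (∑' p : Nat.Primes, 1 / ((p : ℝ) * ((p : ℝ) - 1)) - 1 / 2) := by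
    convert Real.tprod_one_add_le_mul_exp_tsum_sub hs Nat.Primes.one_div_mul_sub_one_nonneg
      ⟨2, Nat.prime_two⟩ using 3 <;> norm_num
  have hexp : exp (∑' p : Nat.Primes, 1 / ((p : ℝ) * ((p : ℝ) - 1)) - 1 / 2) < 13 / 9 :=
    (exp_le_exp.2 (by linarith)).trans_lt Real.exp_one_third_lt
  exact ⟨Real.multipliable_one_sub_of_summable hs, by linarith, by linarith⟩
end
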